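/- arXiv:2605.28984 — 9 statements merged into one kernel-verified Lean document; each statement's English description precedes it below -/
import Mathlib

section
/- Let k be a positive natural number and define f(r) = (2k-1)·r^(2k+1) - (2k+1)·r^(2k) + (2k+1)·r - (2k-1) for real r > 0. Then f is strictly increasing on (0,∞) except possibly at isolated points where f'(r)=0 (more precisely, f'(r) ≥ 0 for all r > 0 with equality only at r = 1 when applicable), and r = 1 is the unique positive root of f. -/
lemma g_factor (m : ℕ) (hm : 1 ≤ m) (r : ℝ) :
    ((m : ℝ) - 1) * r ^ m - (m : ℝ) * r ^ (m - 1) + 1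
      = (r - 1) * (∑ i ∈ Finset.range m, (r ^ (m - 1) - r ^ i)) := by
  have hg : (r - 1) * (∑ i ∈ Finset.range m, r ^ i) = r ^ m - 1 := by
    have := geom_sum_mul r m
    linarith [this]
  have hrm : r ^ m = r ^ (m - 1) * r := by
    rw [← pow_succ]
    congr 1
    omega
  rw [Finset.sum_sub_distrib, Finset.sum_const, Finset.card_range, nsmul_eq_mul,
    mul_sub, hg]
  rw [hrm]
  ring

lemma g_pos (m : ℕ) (hm : 2 ≤ m) (r : ℝ) (hr : 0 < r) (hne : r ≠ 1) :
    0 < ((m : ℝ) - 1) * r ^ m - (m : ℝ) * r ^ (m - 1) + 1 := by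
  rw [g_factor m (by omega) r]
  rcases lt_or_gt_of_ne hne with h | h
  · -- r < 1 : sum is negative, (r-1) negative
    have hsum : (∑ i ∈ Finset.range m, (r ^ (m - 1) - r ^ i)) < 0 := by
      have : 0 < ∑ i ∈ Finset.range m, (r ^ i - r ^ (m - 1)) := by
        apply Finset.sum_pos'
        · intro i hi
          have hi' : i ≤ m - 1 := by
            have := Finset.mem_range.mp hi; omega
          have := pow_le_pow_of_le_one hr.le h.le hi'
          linarith
        · refine ⟨0, Finset.mem_range.mpr (by omega), ?_⟩
          have : r ^ (m - 1) < 1 := pow_lt_one₀ hr.le h (by omega)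
          simpa using by linarith
      have heq : (∑ i ∈ Finset.range m, (r ^ (m - 1) - r ^ i))
          = -∑ i ∈ Finset.range m, (r ^ i - r ^ (m - 1)) := by
        rw [← Finset.sum_neg_distrib]
        apply Finset.sum_congr rfl
        intros; ring
      rw [heq]; linarith
    have : r - 1 < 0 := by linarith
    exact mul_pos_of_neg_of_neg this hsum
  · -- r > 1
    have hsum : 0 < ∑ i ∈ Finset.range m, (r ^ (m - 1) - r ^ i) := by
      apply Finset.sum_pos'
      · intro i hi
        have hi' : i ≤ m - 1 := by
          have := Finset.mem_range.mp hi; omega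
        have := pow_le_pow_right₀ h.le hi'
        linarith
      · refine ⟨0, Finset.mem_range.mpr (by omega), ?_⟩
        have : 1 < r ^ (m - 1) := one_lt_pow₀ h (by omega)
        simpa using by linarith
    exact mul_pos (by linarith) hsum

theorem unique_positive_root (k : ℕ) (hk : 1 ≤ k) (f : ℝ → ℝ)
    (hf : ∀ r : ℝ, f r = ((2 * k : ℝ) - 1) * r ^ (2 * k + 1) - ((2 * k : ℝ) + 1) * r ^ (2 * k)
      + ((2 * k : ℝ) + 1) * r - ((2 * k : ℝ) - 1)) :
    StrictMonoOn f (Set.Ioi (0 : ℝ)) ∧ (∀ r : ℝ, 0 < r → f r = 0 → r = 1) := by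
  have hfe : f = fun r : ℝ => ((2 * k : ℝ) - 1) * r ^ (2 * k + 1)
      - ((2 * k : ℝ) + 1) * r ^ (2 * k) + ((2 * k : ℝ) + 1) * r - ((2 * k : ℝ) - 1) :=
    funext hf
  have hderiv : ∀ r : ℝ, HasDerivAt f
      (((2 * k : ℝ) + 1) * (((2 * k : ℝ) - 1) * r ^ (2 * k) - (2 * k : ℝ) * r ^ (2 * k - 1) + 1)) r := by
    intro r
    rw [hfe]
    have h1 : HasDerivAt (fun r : ℝ => r ^ (2 * k + 1)) ((2 * k + 1 : ℕ) * r ^ (2 * k)) r := by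
      simpa using hasDerivAt_pow (2 * k + 1) r
    have h2 : HasDerivAt (fun r : ℝ => r ^ (2 * k)) ((2 * k : ℕ) * r ^ (2 * k - 1)) r :=
      hasDerivAt_pow (2 * k) r
    have h3 := (((h1.const_mul ((2 * k : ℝ) - 1)).sub
        (h2.const_mul ((2 * k : ℝ) + 1))).add ((hasDerivAt_id r).const_mul ((2 * k : ℝ) + 1))).sub_const
        ((2 * k : ℝ) - 1)
    refine h3.congr_deriv ?_
    push_cast
    ring
  have hdpos : ∀ r : ℝ, 0 < r → r ≠ 1 → 0 < ((2 * k : ℝ) + 1) *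
      (((2 * k : ℝ) - 1) * r ^ (2 * k) - (2 * k : ℝ) * r ^ (2 * k - 1) + 1) := by
    intro r hr hne
    have hg := g_pos (2 * k) (by omega) r hr hne
    push_cast at hg ⊢
    have : (0 : ℝ) < (2 * k : ℝ) + 1 := by positivity
    exact mul_pos this hg
  have hcont : Continuous f := by
    rw [hfe]; continuity
  have mono1 : StrictMonoOn f (Set.Ioc (0 : ℝ) 1) := by
    apply strictMonoOn_of_deriv_pos (convex_Ioc 0 1) hcont.continuousOn
    intro x hx
    rw [interior_Ioc] at hx
    rw [(hderiv x).deriv]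
    exact hdpos x hx.1 (ne_of_lt hx.2)
  have mono2 : StrictMonoOn f (Set.Ici (1 : ℝ)) := by
    apply strictMonoOn_of_deriv_pos (convex_Ici 1) hcont.continuousOn
    intro x hx
    rw [interior_Ici] at hx
    rw [(hderiv x).deriv]
    exact hdpos x (by linarith [Set.mem_Ioi.mp hx]) (ne_of_gt hx)
  have hmono : StrictMonoOn f (Set.Ioi (0 : ℝ)) := by
    intro x hx y hy hxy
    simp only [Set.mem_Ioi] at hx hy
    rcases le_or_gt y 1 with hy1 | hy1
    · exact mono1 ⟨hx, le_of_lt (lt_of_lt_of_le hxy hy1)⟩ ⟨hy, hy1⟩ hxy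
    · rcases le_or_gt 1 x with hx1 | hx1
      · exact mono2 hx1 hy1.le hxy
      · calc f x < f 1 := mono1 ⟨hx, hx1.le⟩ ⟨one_pos, le_refl 1⟩ hx1
          _ < f y := mono2 (Set.mem_Ici.mpr (le_refl 1)) hy1.le hy1
  refine ⟨hmono, ?_⟩
  intro r hr hfr
  have hf1 : f 1 = 0 := by rw [hf]; ring
  by_contra hne
  rcases lt_or_gt_of_ne hne with h | h
  · have := hmono (Set.mem_Ioi.mpr hr) (Set.mem_Ioi.mpr one_pos) h
    rw [hfr, hf1] at this; exact lt_irrefl 0 this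
  · have := hmono (Set.mem_Ioi.mpr one_pos) (Set.mem_Ioi.mpr hr) h
    rw [hfr, hf1] at this; exact lt_irrefl 0 this
end

section
/- Let k ≥ 1 and let p : {-k,…,k} → ℝ be a probability mass function (p_n ≥ 0, ∑ p_n = 1) with mean m = ∑ n·p_n satisfying -k < m < k. If (k-m)·p_{n+1} = (k+m)·p_n for all -k ≤ n ≤ k-1, then p is the uniform distribution: p_n = 1/(2k+1) for all n. -/
/-!
Summing the recurrence against `f n = (n + k + 1) (k - n)`, which vanishes at both ends of the
shifted range, gives `m (E[n²] - k²) = 0`. If `m = 0` the recurrence says that `p` is constant.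
Otherwise `E[n²] = k²`, so `p` vanishes strictly between `-k` and `k`; then the recurrence at
`k - 1` and at `-k` kills `p k` and `p (-k)` as well, and `p` has total mass `0`.
-/

open Finset

theorem mul_sum_Icc_shift_eq_of_recurrence {R : Type*} [CommRing R] {lo hi : ℤ} (hle : lo ≤ hi)
    {p : ℤ → R} {a b : R} (hrec : ∀ n ∈ Icc lo (hi - 1), a * p (n + 1) = b * p n) (f : ℤ → R) :
    a * (∑ n ∈ Icc lo hi, f (n - 1) * p n - f (lo - 1) * p lo) =
      b * (∑ n ∈ Icc lo hi, f n * p n - f hi * p hi) := by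
  have hL : ∑ n ∈ Icc lo hi, f (n - 1) * p n - f (lo - 1) * p lo =
      ∑ n ∈ Icc lo (hi - 1), f n * p (n + 1) := by
    rw [Icc_eq_cons_Ioc hle, sum_cons, add_sub_cancel_left, ← Ico_add_one_add_one_eq_Ioc,
      ← sum_Ico_add', Icc_sub_one_right_eq_Ico]
    simp only [add_sub_cancel_right]
  have hR : ∑ n ∈ Icc lo hi, f n * p n - f hi * p hi = ∑ n ∈ Icc lo (hi - 1), f n * p n := by
    rw [Icc_eq_cons_Ico hle, sum_cons, add_sub_cancel_left, Icc_sub_one_right_eq_Ico]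
  rw [hL, hR, mul_sum, mul_sum]
  refine sum_congr rfl fun n hn => ?_
  rw [mul_left_comm, hrec n hn, mul_left_comm]

theorem sum_quadratic_mul_eq {k : ℕ} {p : ℤ → ℝ} (hsum : ∑ n ∈ Icc (-(k : ℤ)) k, p n = 1)
    (c₀ c₁ : ℝ) :
    ∑ n ∈ Icc (-(k : ℤ)) k, (c₀ + c₁ * n - (n : ℝ) ^ 2) * p n =
      c₀ + c₁ * ∑ n ∈ Icc (-(k : ℤ)) k, (n : ℝ) * p n -
        ∑ n ∈ Icc (-(k : ℤ)) k, (n : ℝ) ^ 2 * p n := by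
  simp only [sub_mul, add_mul, sum_sub_distrib, sum_add_distrib, ← mul_sum, mul_assoc, hsum,
    mul_one]

theorem mean_mul_sum_sq_mul_sub_sq_eq_zero {k : ℕ} {p : ℤ → ℝ} {m : ℝ}
    (hsum : ∑ n ∈ Icc (-(k : ℤ)) k, p n = 1) (hm : m = ∑ n ∈ Icc (-(k : ℤ)) k, (n : ℝ) * p n)
    (hrec : ∀ n ∈ Icc (-(k : ℤ)) (k - 1), ((k : ℝ) - m) * p (n + 1) = ((k : ℝ) + m) * p n) :
    m * (∑ n ∈ Icc (-(k : ℤ)) k, (n : ℝ) ^ 2 * p n - k ^ 2) = 0 := by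
  have h := mul_sum_Icc_shift_eq_of_recurrence (by omega) hrec
    fun n : ℤ => ((n : ℝ) + k + 1) * (k - n)
  have hL : ∑ n ∈ Icc (-(k : ℤ)) k, (((n - 1 : ℤ) : ℝ) + k + 1) * (k - (n - 1 : ℤ)) * p n =
      ∑ n ∈ Icc (-(k : ℤ)) k, ((k ^ 2 + k : ℝ) + 1 * n - (n : ℝ) ^ 2) * p n :=
    sum_congr rfl fun n _ => by push_cast; ring
  have hR : ∑ n ∈ Icc (-(k : ℤ)) k, ((n : ℝ) + k + 1) * (k - n) * p n =
      ∑ n ∈ Icc (-(k : ℤ)) k, ((k ^ 2 + k : ℝ) + (-1) * n - (n : ℝ) ^ 2) * p n :=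
    sum_congr rfl fun n _ => by ring
  simp only [hL, hR, sum_quadratic_mul_eq hsum, ← hm] at h
  push_cast at h
  linear_combination h / 2

theorem eq_of_forall_Icc_add_one_eq {α : Type*} {lo hi : ℤ} {p : ℤ → α}
    (h : ∀ n ∈ Icc lo (hi - 1), p (n + 1) = p n) : ∀ n ∈ Icc lo hi, p n = p lo := by
  intro n hn
  rw [mem_Icc] at hn
  induction n, hn.1 using Int.leInduction with
  | base => rfl
  | succ n hlo ih =>
    rw [h n (mem_Icc.2 ⟨hlo, by omega⟩), ih ⟨hlo, by omega⟩]

theorem eq_one_div_of_forall_Icc_add_one_eq {k : ℕ} {p : ℤ → ℝ}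
    (hsum : ∑ n ∈ Icc (-(k : ℤ)) k, p n = 1)
    (h : ∀ n ∈ Icc (-(k : ℤ)) (k - 1), p (n + 1) = p n) :
    ∀ n ∈ Icc (-(k : ℤ)) k, p n = 1 / (2 * (k : ℝ) + 1) := by
  have hconst := eq_of_forall_Icc_add_one_eq h
  have hcard : (#(Icc (-(k : ℤ)) k) : ℝ) = 2 * k + 1 := by
    rw [Int.card_Icc, show ((k : ℤ) + 1 - -(k : ℤ)).toNat = 2 * k + 1 by omega]
    push_cast
    ring
  have hmass : (2 * (k : ℝ) + 1) * p (-(k : ℤ)) = 1 := by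
    rw [← hcard, ← nsmul_eq_mul, ← sum_const, ← hsum]
    exact (sum_congr rfl hconst).symm
  intro n hn
  rw [hconst n hn, eq_div_iff (by positivity), mul_comm, hmass]

theorem eq_zero_of_sum_sq_mul_eq_sq {k : ℕ} {p : ℤ → ℝ}
    (hpos : ∀ n ∈ Icc (-(k : ℤ)) k, 0 ≤ p n) (hsum : ∑ n ∈ Icc (-(k : ℤ)) k, p n = 1)
    (hsq : ∑ n ∈ Icc (-(k : ℤ)) k, (n : ℝ) ^ 2 * p n = k ^ 2) :
    ∀ n ∈ Ioo (-(k : ℤ)) k, p n = 0 := by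
  have hzero : ∑ n ∈ Icc (-(k : ℤ)) k, ((k : ℝ) ^ 2 - (n : ℝ) ^ 2) * p n = 0 := by
    simp only [sub_mul, sum_sub_distrib, ← mul_sum, hsum, hsq, mul_one, sub_self]
  have hnonneg : ∀ n ∈ Icc (-(k : ℤ)) k, 0 ≤ ((k : ℝ) ^ 2 - (n : ℝ) ^ 2) * p n := by
    intro n hn
    obtain ⟨hlo, hhi⟩ := mem_Icc.1 hn
    have hsq_le : (n : ℝ) ^ 2 ≤ (k : ℝ) ^ 2 :=
      sq_le_sq' (by exact_mod_cast hlo) (by exact_mod_cast hhi)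
    exact mul_nonneg (sub_nonneg.2 hsq_le) (hpos n hn)
  intro n hn
  obtain ⟨hlo, hhi⟩ := mem_Ioo.1 hn
  have hsq_lt : (n : ℝ) ^ 2 < (k : ℝ) ^ 2 :=
    sq_lt_sq' (by exact_mod_cast hlo) (by exact_mod_cast hhi)
  have hterm := (sum_eq_zero_iff_of_nonneg hnonneg).1 hzero n (Ioo_subset_Icc_self hn)
  exact (mul_eq_zero.1 hterm).resolve_left (sub_pos.2 hsq_lt).ne'

theorem sum_sq_mul_ne_sq_of_recurrence {k : ℕ} (hk : 0 < k) {p : ℤ → ℝ} {a b : ℝ}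
    (ha : a ≠ 0) (hb : b ≠ 0)
    (hpos : ∀ n ∈ Icc (-(k : ℤ)) k, 0 ≤ p n) (hsum : ∑ n ∈ Icc (-(k : ℤ)) k, p n = 1)
    (hrec : ∀ n ∈ Icc (-(k : ℤ)) (k - 1), a * p (n + 1) = b * p n) :
    ∑ n ∈ Icc (-(k : ℤ)) k, (n : ℝ) ^ 2 * p n ≠ k ^ 2 := by
  intro hsq
  have hinner := eq_zero_of_sum_sq_mul_eq_sq hpos hsum hsq
  have htop : p k = 0 := by
    have h := hrec (k - 1) (mem_Icc.2 ⟨by omega, le_rfl⟩)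
    rw [sub_add_cancel, hinner (k - 1) (mem_Ioo.2 ⟨by omega, by omega⟩), mul_zero] at h
    exact (mul_eq_zero.1 h).resolve_left ha
  have hbot : p (-k) = 0 := by
    have h := hrec (-k) (mem_Icc.2 ⟨le_rfl, by omega⟩)
    rw [hinner (-k + 1) (mem_Ioo.2 ⟨by omega, by omega⟩), mul_zero] at h
    exact (mul_eq_zero.1 h.symm).resolve_left hb
  have hall : ∀ n ∈ Icc (-(k : ℤ)) k, p n = 0 := by
    intro n hn
    obtain rfl | rfl | hn' : n = -k ∨ n = k ∨ n ∈ Ioo (-(k : ℤ)) k := by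
      rw [mem_Icc] at hn
      rw [mem_Ioo]
      omega
    exacts [hbot, htop, hinner n hn']
  rw [sum_eq_zero hall] at hsum
  exact zero_ne_one hsum

theorem equilibrium_is_uniform_general (k : ℕ) (p : ℤ → ℝ)
    (hpos : ∀ n ∈ Finset.Icc (-(k : ℤ)) (k : ℤ), 0 ≤ p n)
    (hsum : ∑ n ∈ Finset.Icc (-(k : ℤ)) (k : ℤ), p n = 1)
    (m : ℝ) (hm : m = ∑ n ∈ Finset.Icc (-(k : ℤ)) (k : ℤ), (n : ℝ) * p n)
    (hml : -(k : ℝ) < m) (hmr : m < (k : ℝ))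
    (hrec : ∀ n ∈ Finset.Icc (-(k : ℤ)) ((k : ℤ) - 1),
      ((k : ℝ) - m) * p (n + 1) = ((k : ℝ) + m) * p n) :
    ∀ n ∈ Finset.Icc (-(k : ℤ)) (k : ℤ), p n = 1 / (2 * (k : ℝ) + 1) := by
  have hk : 0 < k := by exact_mod_cast (by linarith : (0 : ℝ) < k)
  rcases mul_eq_zero.1 (mean_mul_sum_sq_mul_sub_sq_eq_zero hsum hm hrec) with rfl | hsq
  · refine eq_one_div_of_forall_Icc_add_one_eq hsum fun n hn => ?_
    have h := hrec n hn
    rw [sub_zero, add_zero] at h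
    exact mul_left_cancel₀ (by positivity) h
  · exact absurd (sub_eq_zero.1 hsq) <|
      sum_sq_mul_ne_sq_of_recurrence hk (sub_pos.2 hmr).ne' (by linarith : (0 : ℝ) < k + m).ne'
        hpos hsum hrec

theorem equilibrium_is_uniform (k : ℕ) (hk : 1 ≤ k) (p : ℤ → ℝ)
    (hpos : ∀ n ∈ Finset.Icc (-(k : ℤ)) (k : ℤ), 0 ≤ p n)
    (hsum : ∑ n ∈ Finset.Icc (-(k : ℤ)) (k : ℤ), p n = 1)
    (m : ℝ) (hm : m = ∑ n ∈ Finset.Icc (-(k : ℤ)) (k : ℤ), (n : ℝ) * p n)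
    (hml : -(k : ℝ) < m) (hmr : m < (k : ℝ))
    (hrec : ∀ n ∈ Finset.Icc (-(k : ℤ)) ((k : ℤ) - 1),
      ((k : ℝ) - m) * p (n + 1) = ((k : ℝ) + m) * p n) :
    ∀ n ∈ Finset.Icc (-(k : ℤ)) (k : ℤ), p n = 1 / (2 * (k : ℝ) + 1) :=
  equilibrium_is_uniform_general k p hpos hsum m hm hml hmr hrec
end

section
/- Discrete Poincaré inequality: let x = (x_0,…,x_{2k}) ∈ ℝ^{2k+1} satisfy ∑_{n=0}^{2k} x_n = 0. Then ∑_{n=0}^{2k} x_n² ≤ 4(2k+1)² · ∑_{n=0}^{2k-1} (x_{n+1} - x_n)². -/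
/-!
Since the mean of `x` vanishes, each `|x m|` is at most the average of the distances `|x m - x j|`,
and each such distance is bounded, by telescoping, by the total variation `∑ |x (i+1) - x i|`.
Cauchy–Schwarz bounds the square of the total variation over `n` steps by `n ∑ (x (i+1) - x i)²`,
which gives `∑ x i² ≤ (n + 1) n ∑ (x (i+1) - x i)²`.
-/

open Finset

namespace DiscretePoincare

variable (x : ℕ → ℝ)

theorem abs_sub_le_sum_abs_sub_succ {a b n : ℕ} (ha : a ≤ n) (hb : b ≤ n) :
    |x a - x b| ≤ ∑ i ∈ range n, |x (i + 1) - x i| := by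
  wlog hab : a ≤ b generalizing a b
  · rw [abs_sub_comm]
    exact this hb ha (le_of_not_ge hab)
  calc |x a - x b| = |∑ i ∈ Ico a b, (x (i + 1) - x i)| := by
        rw [sum_Ico_eq_sub _ hab, sum_range_sub, sum_range_sub, abs_sub_comm]
        ring_nf
    _ ≤ ∑ i ∈ Ico a b, |x (i + 1) - x i| := abs_sum_le_sum_abs _ _
    _ ≤ ∑ i ∈ range n, |x (i + 1) - x i| :=
        sum_le_sum_of_subset_of_nonneg
          (fun i hi => by simp only [mem_Ico, mem_range] at hi ⊢; omega)
          (fun _ _ _ => abs_nonneg _)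

theorem abs_le_sum_abs_sub_succ_of_sum_eq_zero {n m : ℕ}
    (hsum : ∑ i ∈ range (n + 1), x i = 0) (hm : m ≤ n) :
    |x m| ≤ ∑ i ∈ range n, |x (i + 1) - x i| := by
  set T := ∑ i ∈ range n, |x (i + 1) - x i|
  have hmean : ((n + 1 : ℕ) : ℝ) * x m = ∑ j ∈ range (n + 1), (x m - x j) := by
    rw [sum_sub_distrib, hsum, sum_const, card_range, nsmul_eq_mul, sub_zero]
  have hbound : ((n + 1 : ℕ) : ℝ) * |x m| ≤ (n + 1 : ℕ) * T :=
    calc ((n + 1 : ℕ) : ℝ) * |x m| = |∑ j ∈ range (n + 1), (x m - x j)| := by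
          rw [← hmean, abs_mul, Nat.abs_cast]
      _ ≤ ∑ j ∈ range (n + 1), |x m - x j| := abs_sum_le_sum_abs _ _
      _ ≤ ∑ _j ∈ range (n + 1), T := sum_le_sum fun j hj =>
          abs_sub_le_sum_abs_sub_succ x hm (Nat.lt_succ_iff.mp (mem_range.mp hj))
      _ = (n + 1 : ℕ) * T := by rw [sum_const, card_range, nsmul_eq_mul]
  exact le_of_mul_le_mul_left hbound (by positivity)

theorem sum_sq_le_of_sum_eq_zero {n : ℕ} (hsum : ∑ i ∈ range (n + 1), x i = 0) :
    ∑ i ∈ range (n + 1), x i ^ 2 ≤ (n + 1) * n * ∑ i ∈ range n, (x (i + 1) - x i) ^ 2 := by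
  set T := ∑ i ∈ range n, |x (i + 1) - x i|
  have hcs : T ^ 2 ≤ n * ∑ i ∈ range n, (x (i + 1) - x i) ^ 2 := by
    simpa only [card_range, sq_abs] using
      sq_sum_le_card_mul_sum_sq (s := range n) (f := fun i => |x (i + 1) - x i|)
  calc ∑ i ∈ range (n + 1), x i ^ 2 ≤ ∑ _i ∈ range (n + 1), T ^ 2 :=
        sum_le_sum fun i hi => by
          have hxi := abs_le_sum_abs_sub_succ_of_sum_eq_zero x hsum
            (Nat.lt_succ_iff.mp (mem_range.mp hi))
          simpa only [sq_abs] using pow_le_pow_left₀ (abs_nonneg _) hxi 2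
    _ = (n + 1) * T ^ 2 := by rw [sum_const, card_range, nsmul_eq_mul]; push_cast; ring
    _ ≤ (n + 1) * n * ∑ i ∈ range n, (x (i + 1) - x i) ^ 2 := by
        rw [mul_assoc]; gcongr

end DiscretePoincare

theorem discrete_poincare_general (k : ℕ) (x : ℕ → ℝ)
    (hsum : ∑ n ∈ Finset.range (2 * k + 1), x n = 0) :
    ∑ n ∈ Finset.range (2 * k + 1), (x n) ^ 2 ≤
      4 * (2 * (k : ℝ) + 1) ^ 2 * ∑ n ∈ Finset.range (2 * k), (x (n + 1) - x n) ^ 2 := by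
  have hS : 0 ≤ ∑ n ∈ Finset.range (2 * k), (x (n + 1) - x n) ^ 2 := by positivity
  have hconst : ((2 * k : ℕ) + 1 : ℝ) * (2 * k : ℕ) ≤ 4 * (2 * (k : ℝ) + 1) ^ 2 := by
    push_cast; nlinarith
  exact (DiscretePoincare.sum_sq_le_of_sum_eq_zero x hsum).trans
    (mul_le_mul_of_nonneg_right hconst hS)

theorem discrete_poincare (k : ℕ) (hk : 1 ≤ k) (x : ℕ → ℝ)
    (hsum : ∑ n ∈ Finset.range (2 * k + 1), x n = 0) :
    ∑ n ∈ Finset.range (2 * k + 1), (x n) ^ 2 ≤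
      4 * (2 * (k : ℝ) + 1) ^ 2 * ∑ n ∈ Finset.range (2 * k), (x (n + 1) - x n) ^ 2 :=
  discrete_poincare_general k x hsum
end

section
/- Let x = (x_0,…,x_{2k}) ∈ ℝ^{2k+1} with ∑_n x_n = 0, and let L be the (2k+1)×(2k+1) tridiagonal matrix with off-diagonal entries 1/2, diagonal entries -1 in the interior and -1/2 at the two corners. Then ⟨-Lx, x⟩ = (1/2)∑_{n=0}^{2k-1}(x_{n+1}-x_n)², and consequently ⟨-Lx, x⟩ ≥ (1/(8(2k+1)²))·‖x‖²_{ℓ²}. -/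
open Finset

private lemma aux_expand (y : ℕ → ℝ) :
    ∀ m, 1 ≤ m →
      ∑ n ∈ range m, (y (n+1) - y n)^2
        = y 0^2 + y m^2 + 2*∑ n ∈ Ico 1 m, y n^2 - 2*∑ n ∈ range m, y n * y (n+1) := by
  intro m hm
  induction m, hm using Nat.le_induction with
  | base => simp; ring
  | succ m hm ih =>
      rw [sum_range_succ, ih, sum_Ico_succ_top hm, sum_range_succ]
      ring

private lemma aux_poincare (N : ℕ) (hN : 1 ≤ N) (y : ℕ → ℝ)
    (hsum : ∑ n ∈ range N, y n = 0) :
    ∑ n ∈ range N, y n ^ 2 ≤ (N:ℝ)^2 * ∑ n ∈ range (N-1), (y (n+1) - y n)^2 := by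
  set D := ∑ n ∈ range (N-1), (y (n+1) - y n)^2 with hD
  have hD0 : 0 ≤ D := sum_nonneg fun n _ => sq_nonneg _
  have key : ∀ i j, i < N → j < N → (y i - y j)^2 ≤ (N:ℝ) * D := by
    have half : ∀ i j, i ≤ j → j < N → (y j - y i)^2 ≤ (N:ℝ) * D := by
      intro i j hij hj
      have htel : y j - y i = ∑ n ∈ Ico i j, (y (n+1) - y n) := by
        rw [sum_Ico_eq_sub _ hij, sum_range_sub, sum_range_sub]; ring
      rw [htel]
      calc (∑ n ∈ Ico i j, (y (n+1) - y n))^2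
          ≤ (Ico i j).card * ∑ n ∈ Ico i j, (y (n+1) - y n)^2 :=
            sq_sum_le_card_mul_sum_sq
        _ ≤ (N:ℝ) * D := by
            apply mul_le_mul
            · rw [Nat.card_Ico]; exact_mod_cast Nat.le_of_lt_succ (by omega)
            · apply sum_le_sum_of_subset_of_nonneg
              · intro n hn
                rw [mem_Ico] at hn; rw [mem_range]; omega
              · intro n _ _; exact sq_nonneg _
            · exact sum_nonneg fun n _ => sq_nonneg _
            · positivity
    intro i j hi hj
    rcases le_total j i with h | h
    · have := half j i h hi
      calc (y i - y j)^2 = (y i - y j)^2 := rfl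
        _ ≤ (N:ℝ) * D := by nlinarith [this]
    · have := half i j h hj
      nlinarith [this]
  have hNpos : (0:ℝ) < N := by exact_mod_cast hN
  have step : ∀ i ∈ range N, (N:ℝ)^2 * y i ^2 ≤ (N:ℝ)^3 * D := by
    intro i hi
    rw [mem_range] at hi
    have h1 : (N:ℝ) * y i = ∑ j ∈ range N, (y i - y j) := by
      rw [sum_sub_distrib, hsum, sum_const, card_range]; ring
    have h2 : ((N:ℝ) * y i)^2 ≤ (N:ℝ) * ∑ j ∈ range N, (y i - y j)^2 := by
      rw [h1]
      have := sq_sum_le_card_mul_sum_sq (s := range N) (f := fun j => y i - y j)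
      simpa using this
    have h3 : ∑ j ∈ range N, (y i - y j)^2 ≤ ∑ j ∈ range N, (N:ℝ) * D :=
      sum_le_sum fun j hj => key i j hi (mem_range.mp hj)
    rw [sum_const, card_range, nsmul_eq_mul] at h3
    nlinarith [h2, h3]
  have total := sum_le_sum step
  rw [sum_const, card_range, nsmul_eq_mul, ← mul_sum] at total
  have h5 : (N:ℝ)^2 * (∑ n ∈ range N, y n ^ 2) ≤ (N:ℝ)^2 * ((N:ℝ)^2 * D) := by
    nlinarith [total]
  exact le_of_mul_le_mul_left h5 (by positivity)

theorem dirichlet_form_and_spectral_gap (k : ℕ) (hk : 1 ≤ k)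
    (L : Matrix (Fin (2 * k + 1)) (Fin (2 * k + 1)) ℝ)
    (hL : ∀ i j : Fin (2 * k + 1),
      L i j = if (i : ℕ) = (j : ℕ) then
          (if (i : ℕ) = 0 ∨ (i : ℕ) = 2 * k then -(1 / 2 : ℝ) else -1)
        else if (i : ℕ) + 1 = (j : ℕ) ∨ (j : ℕ) + 1 = (i : ℕ) then (1 / 2 : ℝ) else 0)
    (x : Fin (2 * k + 1) → ℝ) (hx : ∑ i, x i = 0) :
    (∑ i, (-(L.mulVec x) i) * x i =
      (1 / 2) * ∑ n : Fin (2 * k), (x n.succ - x n.castSucc) ^ 2) ∧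
    (1 / (8 * (2 * (k : ℝ) + 1) ^ 2) * ∑ i, (x i) ^ 2 ≤ ∑ i, (-(L.mulVec x) i) * x i) := by
  set y : ℕ → ℝ := fun n => if h : n < 2 * k + 1 then x ⟨n, h⟩ else 0 with hydef
  have hy : ∀ i : Fin (2 * k + 1), x i = y ↑i := by
    intro i
    simp [hydef, i.isLt]
    intro h; have := i.isLt; omega
  set c : ℕ → ℕ → ℝ := fun n m =>
    if n = m then (if n = 0 ∨ n = 2 * k then -(1 / 2 : ℝ) else -1)
    else if n + 1 = m ∨ m + 1 = n then (1 / 2 : ℝ) else 0 with hcdef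
  -- sums over Fin to sums over range
  have hxsum : ∑ n ∈ range (2 * k + 1), y n = 0 := by
    rw [← Fin.sum_univ_eq_sum_range]
    rw [← hx]
    exact Finset.sum_congr rfl fun i _ => (hy i).symm
  have hmv : ∀ i : Fin (2 * k + 1),
      L.mulVec x i = ∑ m ∈ range (2 * k + 1), c ↑i m * y m := by
    intro i
    rw [← Fin.sum_univ_eq_sum_range (fun m => c ↑i m * y m)]
    simp only [Matrix.mulVec, dotProduct]
    exact Finset.sum_congr rfl fun j _ => by rw [hL i j, hy j]
  have hlhs : ∑ i, (-(L.mulVec x) i) * x i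
      = ∑ n ∈ range (2 * k + 1), (-(∑ m ∈ range (2 * k + 1), c n m * y m)) * y n := by
    rw [← Fin.sum_univ_eq_sum_range (fun n => (-(∑ m ∈ range (2 * k + 1), c n m * y m)) * y n)]
    exact Finset.sum_congr rfl fun i _ => by
      rw [hmv i, hy i]
  -- split into three pieces
  have hsplit : ∀ n ∈ range (2 * k + 1),
      (-(∑ m ∈ range (2 * k + 1), c n m * y m)) * y n
        = ((if n = 0 ∨ n = 2 * k then (1/2:ℝ) else 1) * y n ^ 2)
          + (∑ m ∈ range (2 * k + 1), (if m = n + 1 then -(1/2:ℝ) * y n * y (n+1) else 0))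
          + (∑ m ∈ range (2 * k + 1), (if m + 1 = n then -(1/2:ℝ) * y m * y n else 0)) := by
    intro n hn
    have hdiag : ((if n = 0 ∨ n = 2 * k then (1/2:ℝ) else 1) * y n ^ 2)
        = ∑ m ∈ range (2*k+1),
            (if m = n then (if n = 0 ∨ n = 2 * k then (1/2:ℝ) else 1) * y n ^ 2 else 0) := by
      rw [Finset.sum_ite_eq' (range (2*k+1)) n, if_pos hn]
    rw [hdiag, ← Finset.sum_add_distrib, ← Finset.sum_add_distrib, neg_mul, Finset.sum_mul,
      ← Finset.sum_neg_distrib]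
    apply Finset.sum_congr rfl
    intro m hm
    simp only [hcdef]
    split_ifs <;> first | (subst_vars; ring1) | (exfalso; omega)
  have hswap : ∑ n ∈ range (2 * k + 1), ∑ m ∈ range (2 * k + 1),
        (if m + 1 = n then -(1/2:ℝ) * y m * y n else 0)
      = ∑ n ∈ range (2 * k + 1), ∑ m ∈ range (2 * k + 1),
        (if m = n + 1 then -(1/2:ℝ) * y n * y (n+1) else 0) := by
    rw [Finset.sum_comm]
    apply Finset.sum_congr rfl; intro n _
    apply Finset.sum_congr rfl; intro m _
    by_cases h : m = n + 1
    · subst h; simp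
    · rw [if_neg h, if_neg (by omega)]
  have hoff : ∀ n : ℕ, ∑ m ∈ range (2 * k + 1),
        (if m = n + 1 then -(1/2:ℝ) * y n * y (n+1) else 0)
      = if n + 1 ∈ range (2*k+1) then -(1/2:ℝ) * y n * y (n+1) else 0 := by
    intro n
    rw [Finset.sum_ite_eq' (range (2*k+1)) (n+1)]
  have hoffsum : ∑ n ∈ range (2 * k + 1),
        (if n + 1 ∈ range (2*k+1) then -(1/2:ℝ) * y n * y (n+1) else 0)
      = -(1/2:ℝ) * ∑ n ∈ range (2*k), y n * y (n+1) := by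
    rw [sum_range_succ, if_neg (by simp), add_zero, mul_sum]
    apply Finset.sum_congr rfl
    intro n hn
    rw [mem_range] at hn
    rw [if_pos (by rw [mem_range]; omega)]
    ring
  have hdiagsum : ∑ n ∈ range (2 * k + 1),
        ((if n = 0 ∨ n = 2 * k then (1/2:ℝ) else 1) * y n ^ 2)
      = (1/2) * y 0 ^2 + (1/2) * y (2*k) ^2 + ∑ n ∈ Ico 1 (2*k), y n ^ 2 := by
    rw [sum_range_succ, if_pos (Or.inr rfl)]
    rw [range_eq_Ico, sum_eq_sum_Ico_succ_bot (by omega : 0 < 2*k)]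
    rw [if_pos (Or.inl rfl)]
    have : ∑ n ∈ Ico 1 (2*k), ((if n = 0 ∨ n = 2 * k then (1/2:ℝ) else 1) * y n ^ 2)
        = ∑ n ∈ Ico 1 (2*k), y n ^ 2 := by
      apply Finset.sum_congr rfl
      intro n hn
      rw [mem_Ico] at hn
      rw [if_neg (by omega)]; ring
    rw [this]; ring
  have key1 : ∑ i, (-(L.mulVec x) i) * x i
      = (1/2) * ∑ n ∈ range (2*k), (y (n+1) - y n)^2 := by
    rw [hlhs, Finset.sum_congr rfl hsplit]
    rw [Finset.sum_add_distrib, Finset.sum_add_distrib, hswap]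
    simp only [hoff]
    rw [hoffsum, hdiagsum, aux_expand y (2*k) (by omega)]
    ring
  have key2 : ∑ n : Fin (2 * k), (x n.succ - x n.castSucc) ^ 2
      = ∑ n ∈ range (2*k), (y (n+1) - y n)^2 := by
    rw [← Fin.sum_univ_eq_sum_range (fun n => (y (n+1) - y n)^2)]
    apply Finset.sum_congr rfl
    intro n _
    rw [hy, hy]
    simp [Fin.val_succ, Fin.coe_castSucc]
  constructor
  · rw [key1, key2]
  · have hpo := aux_poincare (2*k+1) (by omega) y hxsum
    have hsx : ∑ i, (x i)^2 = ∑ n ∈ range (2*k+1), y n ^2 := by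
      rw [← Fin.sum_univ_eq_sum_range (fun n => y n ^2)]
      exact Finset.sum_congr rfl fun i _ => by rw [hy]
    have hD0 : (0:ℝ) ≤ ∑ n ∈ range (2*k), (y (n+1) - y n)^2 :=
      sum_nonneg fun n _ => sq_nonneg _
    rw [key1, hsx]
    have hred : (2*k+1) - 1 = 2*k := by omega
    rw [hred] at hpo
    have hcast : ((2*k+1 : ℕ) : ℝ) = 2*(k:ℝ)+1 := by push_cast; ring
    rw [hcast] at hpo
    have hpos : (0:ℝ) < (2*(k:ℝ)+1)^2 := by positivity
    rw [div_mul_eq_mul_div, div_le_iff₀ (by positivity)]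
    nlinarith [hpo, hD0, hpos]
end

section
/- For the mean-field system with k=1: if M(0) > 1 then M(t) ≥ M(0) > 1 for all t ≥ 0, and M(t) converges to some limit M_∞ ∈ (1,2] as t → ∞; moreover q₁(t) → 0. -/
open Set Real MeasureTheory intervalIntegral Filter

lemma ode_ge_exp (u a b : ℝ → ℝ)
    (ha : ∀ t ≥ (0:ℝ), ContinuousAt a t)
    (hu : ∀ t ≥ (0:ℝ), HasDerivAt u (a t * u t + b t) t)
    (hb : ∀ t ≥ (0:ℝ), 0 ≤ b t) :
    ∀ t ≥ (0:ℝ), u 0 * Real.exp (∫ s in (0:ℝ)..t, a (max s 0)) ≤ u t := by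
  set ab : ℝ → ℝ := fun s => a (max s 0) with habdef
  have hcab : Continuous ab := by
    have h1 : ContinuousOn a (Set.Ici 0) := fun t ht => (ha t ht).continuousWithinAt
    exact h1.comp_continuous (continuous_id.max continuous_const) (fun x => Set.mem_Ici.mpr (le_max_right _ _))
  set A : ℝ → ℝ := fun x => ∫ s in (0:ℝ)..x, ab s with hAdef
  have hA : ∀ t : ℝ, HasDerivAt A (ab t) t := fun t =>
    intervalIntegral.integral_hasDerivAt_right (hcab.intervalIntegrable _ _)
      (hcab.stronglyMeasurableAtFilter _ _) hcab.continuousAt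
  have hAcont : Continuous A := by
    have : Differentiable ℝ A := fun t => (hA t).differentiableAt
    exact this.continuous
  set v : ℝ → ℝ := fun t => u t * Real.exp (-(A t)) with hvdef
  have hv : ∀ t ≥ (0:ℝ), HasDerivAt v (b t * Real.exp (-(A t))) t := by
    intro t ht
    have h1 : HasDerivAt (fun x => Real.exp (-(A x))) (Real.exp (-(A t)) * (-(ab t))) t :=
      ((hA t).neg).exp
    have h2 := (hu t ht).mul h1
    have hab : ab t = a t := by simp [habdef, max_eq_left ht]
    exact h2.congr_deriv (by rw [hab]; ring)
  have hmono : MonotoneOn v (Set.Ici (0:ℝ)) := by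
    apply monotoneOn_of_deriv_nonneg (convex_Ici 0)
    · intro t ht
      exact ((hu t ht).continuousAt.mul
        ((Real.continuous_exp.comp hAcont.neg).continuousAt)).continuousWithinAt
    · intro t ht
      rw [interior_Ici] at ht
      exact ((hv t (le_of_lt ht)).differentiableAt).differentiableWithinAt
    · intro t ht
      rw [interior_Ici] at ht
      rw [(hv t ht.le).deriv]
      exact mul_nonneg (hb t ht.le) (Real.exp_pos _).le
  intro t ht
  have h1 : v 0 ≤ v t := hmono (self_mem_Ici) ht ht
  have hA0 : A 0 = 0 := intervalIntegral.integral_same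
  have h2 : v 0 = u 0 := by simp [hvdef, hA0]
  rw [h2] at h1
  have h3 : u 0 * Real.exp (A t) ≤ v t * Real.exp (A t) :=
    mul_le_mul_of_nonneg_right h1 (Real.exp_pos _).le
  have h4 : v t * Real.exp (A t) = u t := by
    simp only [hvdef]
    rw [Real.exp_neg]
    field_simp
  rw [h4] at h3
  exact h3

theorem mean_monotone_and_limit_k1 (q0 q1 q2 : ℝ → ℝ) (M : ℝ → ℝ)
    (hM : ∀ t, M t = q1 t + 2 * q2 t)
    (h0 : ∀ t ≥ (0 : ℝ), HasDerivAt q0 ((1 - M t / 2) * q1 t - M t / 2 * q0 t) t)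
    (h1 : ∀ t ≥ (0 : ℝ), HasDerivAt q1 ((1 - M t / 2) * q2 t + M t / 2 * q0 t - q1 t) t)
    (h2 : ∀ t ≥ (0 : ℝ), HasDerivAt q2 (M t / 2 * q1 t - (1 - M t / 2) * q2 t) t)
    (hpos : 0 ≤ q0 0 ∧ 0 ≤ q1 0 ∧ 0 ≤ q2 0)
    (hsum : q0 0 + q1 0 + q2 0 = 1)
    (hM0 : 1 < M 0) :
    (∀ s t : ℝ, 0 ≤ s → s ≤ t → M s ≤ M t) ∧
    (∀ t ≥ (0 : ℝ), 1 < M t ∧ M t ≤ 2) ∧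
    (∃ Minf : ℝ, 1 < Minf ∧ Minf ≤ 2 ∧
      Filter.Tendsto M Filter.atTop (nhds Minf)) ∧
    Filter.Tendsto q1 Filter.atTop (nhds 0) := by
  have hMfun : M = fun t => q1 t + 2 * q2 t := funext hM
  have hq1c : ∀ t ≥ (0:ℝ), ContinuousAt q1 t := fun t ht => (h1 t ht).continuousAt
  have hq2c : ∀ t ≥ (0:ℝ), ContinuousAt q2 t := fun t ht => (h2 t ht).continuousAt
  have hMc : ∀ t ≥ (0:ℝ), ContinuousAt M t := by
    intro t ht
    rw [hMfun]
    exact (hq1c t ht).add (continuousAt_const.mul (hq2c t ht))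
  -- sum is constant 1
  have hSder : ∀ t ≥ (0:ℝ), HasDerivAt (fun t => q0 t + q1 t + q2 t) 0 t := by
    intro t ht
    have h := ((h0 t ht).add (h1 t ht)).add (h2 t ht)
    exact h.congr_deriv (by ring)
  have hSub : ∀ t ≥ (0:ℝ), 0 ≤ q0 t + q1 t + q2 t - 1 := by
    intro t ht
    have key := ode_ge_exp (fun t => q0 t + q1 t + q2 t - 1) (fun _ => 0) (fun _ => 0)
      (fun t _ => continuousAt_const)
      (by intro s hs
          have := (hSder s hs).sub_const 1
          exact this.congr_deriv (by ring))
      (fun _ _ => le_refl 0) t ht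
    simp only [hsum, sub_self, zero_mul] at key
    linarith [key]
  have hSlb : ∀ t ≥ (0:ℝ), 0 ≤ 1 - (q0 t + q1 t + q2 t) := by
    intro t ht
    have key := ode_ge_exp (fun t => 1 - (q0 t + q1 t + q2 t)) (fun _ => 0) (fun _ => 0)
      (fun t _ => continuousAt_const)
      (by intro s hs
          have := (hasDerivAt_const s (1:ℝ)).sub (hSder s hs)
          exact this.congr_deriv (by ring))
      (fun _ _ => le_refl 0) t ht
    simp only [hsum, sub_self, zero_mul] at key
    linarith [key]
  have hS : ∀ t ≥ (0:ℝ), q0 t + q1 t + q2 t = 1 := by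
    intro t ht; have := hSub t ht; have := hSlb t ht; linarith
  -- derivative of M
  have hMder : ∀ t ≥ (0:ℝ), HasDerivAt M ((M t - 1) * q1 t / 2) t := by
    intro t ht
    have h : HasDerivAt (fun t => q1 t + 2 * q2 t)
        (((1 - M t / 2) * q2 t + M t / 2 * q0 t - q1 t) +
          2 * (M t / 2 * q1 t - (1 - M t / 2) * q2 t)) t :=
      (h1 t ht).add ((h2 t ht).const_mul 2)
    have key : (M t - 1) * q1 t / 2 =
        (1 - M t / 2) * q2 t + M t / 2 * q0 t - q1 t +
          2 * (M t / 2 * q1 t - (1 - M t / 2) * q2 t) := by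
      linear_combination (-(M t / 2)) * hS t ht - (1 / 2) * hM t
    have h' : HasDerivAt (fun t => q1 t + 2 * q2 t) ((M t - 1) * q1 t / 2) t := by
      rw [key]; exact h
    rw [← hMfun] at h'
    exact h'
  -- derivative of q1 in closed form
  have hq1der : ∀ t ≥ (0:ℝ), HasDerivAt q1 (M t * (2 - M t) / 2 - 3 / 2 * q1 t) t := by
    intro t ht
    convert h1 t ht using 1
    linear_combination (-(M t / 2)) * hS t ht - ((M t - 1) / 2) * hM t
  -- w := 2 - M - q1 is nonnegative
  have hwder : ∀ t ≥ (0:ℝ), HasDerivAt (fun t => 2 - M t - q1 t)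
      ((q1 t - M t / 2) * (2 - M t - q1 t) + q1 t ^ 2) t := by
    intro t ht
    have h := ((hasDerivAt_const t (2:ℝ)).sub (hMder t ht)).sub (hq1der t ht)
    exact h.congr_deriv (by ring)
  have hwge : ∀ t ≥ (0:ℝ), 0 ≤ 2 - M t - q1 t := by
    intro t ht
    have key := ode_ge_exp (fun t => 2 - M t - q1 t) (fun t => q1 t - M t / 2)
      (fun t => q1 t ^ 2)
      (fun t ht => (hq1c t ht).sub ((hMc t ht).div_const 2))
      (hwder) (fun t _ => sq_nonneg _) t ht
    have hw0 : 0 ≤ 2 - M 0 - q1 0 := by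
      have := hM 0; linarith [hpos.1, hpos.2.1, hpos.2.2, hsum]
    have hmul := mul_nonneg hw0 (Real.exp_pos
      (∫ s in (0:ℝ)..t, (fun t => q1 t - M t / 2) (max s 0))).le
    linarith [key, hmul]
  -- M > 1 forever
  have hMgt1 : ∀ t ≥ (0:ℝ), 1 < M t := by
    intro t ht
    have key := ode_ge_exp (fun t => M t - 1) (fun t => q1 t / 2) (fun _ => 0)
      (fun t ht => (hq1c t ht).div_const 2)
      (by intro s hs
          have := (hMder s hs).sub_const 1
          exact this.congr_deriv (by ring))
      (fun _ _ => le_refl 0) t ht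
    have := mul_pos (by linarith : (0:ℝ) < M 0 - 1) (Real.exp_pos
      (∫ s in (0:ℝ)..t, (fun t => q1 t / 2) (max s 0)))
    linarith [key]
  -- q1 ≥ 0
  have hq1ge : ∀ t ≥ (0:ℝ), 0 ≤ q1 t := by
    intro t ht
    have key := ode_ge_exp q1 (fun t => (M t - 3) / 2)
      (fun t => M t / 2 * (2 - M t - q1 t))
      (fun t ht => ((hMc t ht).sub continuousAt_const).div_const 2)
      (by intro s hs
          convert hq1der s hs using 1
          ring)
      (fun t ht => mul_nonneg (by linarith [hMgt1 t ht]) (hwge t ht)) t ht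
    have := mul_nonneg hpos.2.1 (Real.exp_pos
      (∫ s in (0:ℝ)..t, (fun t => (M t - 3) / 2) (max s 0))).le
    linarith [key]
  have hMle2 : ∀ t ≥ (0:ℝ), M t ≤ 2 := by
    intro t ht; linarith [hwge t ht, hq1ge t ht]
  -- M monotone on [0, ∞)
  have hmonoM : MonotoneOn M (Set.Ici (0:ℝ)) := by
    apply monotoneOn_of_deriv_nonneg (convex_Ici 0)
    · exact fun t ht => (hMc t ht).continuousWithinAt
    · intro t ht
      rw [interior_Ici] at ht
      exact ((hMder t ht.le).differentiableAt).differentiableWithinAt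
    · intro t ht
      rw [interior_Ici] at ht
      rw [(hMder t ht.le).deriv]
      exact div_nonneg (mul_nonneg (by linarith [hMgt1 t ht.le]) (hq1ge t ht.le)) (by norm_num)
  -- the limit
  set L : ℝ := sSup (M '' Set.Ici 0) with hLdef
  have hne : (M '' Set.Ici 0).Nonempty := ⟨M 0, 0, self_mem_Ici, rfl⟩
  have hbdd : BddAbove (M '' Set.Ici 0) := by
    refine ⟨2, ?_⟩
    rintro x ⟨t, ht, rfl⟩
    exact hMle2 t ht
  have hle : ∀ t ≥ (0:ℝ), M t ≤ L := fun t ht => le_csSup hbdd ⟨t, ht, rfl⟩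
  have hL2 : L ≤ 2 := csSup_le hne (by rintro x ⟨t, ht, rfl⟩; exact hMle2 t ht)
  have hL1 : 1 < L := lt_of_lt_of_le hM0 (hle 0 le_rfl)
  have htend : Filter.Tendsto M Filter.atTop (nhds L) := by
    rw [Metric.tendsto_atTop]
    intro ε hε
    obtain ⟨x, ⟨t0, ht0, rfl⟩, hx⟩ := exists_lt_of_lt_csSup hne
      (by linarith : L - ε < L)
    refine ⟨t0, fun t ht => ?_⟩
    have ht' : (0:ℝ) ≤ t := le_trans ht0 ht
    have h1 : M t0 ≤ M t := hmonoM ht0 ht' ht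
    have h2 : M t ≤ L := hle t ht'
    rw [Real.dist_eq, abs_lt]
    constructor <;> linarith
  -- L = 2
  have hLeq2 : L = 2 := by
    by_contra h
    have hLlt : L < 2 := lt_of_le_of_ne hL2 h
    set c : ℝ := (2 - L) / 2 with hcdef
    have hc : 0 < c := by simp only [hcdef]; linarith
    have hsource : ∀ t ≥ (0:ℝ), c ≤ M t * (2 - M t) / 2 := by
      intro t ht
      have h1 := hMgt1 t ht
      have h2 := hle t ht
      nlinarith [mul_nonneg (by linarith : (0:ℝ) ≤ M t - 1) (by linarith : (0:ℝ) ≤ 2 - M t)]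
    have hlow := ode_ge_exp (fun t => q1 t - 2 * c / 3) (fun _ => -(3:ℝ) / 2)
      (fun t => M t * (2 - M t) / 2 - c)
      (fun t _ => continuousAt_const)
      (by intro s hs
          have := (hq1der s hs).sub_const (2 * c / 3)
          exact this.congr_deriv (by ring))
      (fun t ht => by linarith [hsource t ht])
    have hq1low : ∀ t ≥ (1:ℝ), c / 3 ≤ q1 t := by
      intro t ht
      have ht0 : (0:ℝ) ≤ t := by linarith
      have key := hlow t ht0
      have hint : (∫ s in (0:ℝ)..t, (fun _ => -(3:ℝ) / 2) (max s 0)) = t * (-(3:ℝ) / 2) := by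
        simp [intervalIntegral.integral_const]
        ring
      rw [hint] at key
      set E : ℝ := Real.exp (t * (-(3:ℝ) / 2)) with hEdef
      have hEpos : 0 < E := Real.exp_pos _
      have hexp32 : (2:ℝ) ≤ Real.exp (3 / 2) := by
        nlinarith [Real.add_one_le_exp (3 / 2 : ℝ)]
      have hEle : E ≤ 1 / 2 := by
        have h1 : t * (-(3:ℝ) / 2) ≤ -(3 / 2) := by nlinarith
        have h2 : E ≤ Real.exp (-(3/2)) := by
          rw [hEdef]; exact Real.exp_le_exp.mpr h1
        have h3 : Real.exp (-(3/2 : ℝ)) = (Real.exp (3/2 : ℝ))⁻¹ := Real.exp_neg _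
        have h4 : (Real.exp (3/2 : ℝ))⁻¹ ≤ (2:ℝ)⁻¹ :=
          inv_anti₀ (by norm_num) hexp32
        rw [h3] at h2
        calc E ≤ (Real.exp (3/2 : ℝ))⁻¹ := h2
          _ ≤ (2:ℝ)⁻¹ := h4
          _ = 1 / 2 := by norm_num
      have hq10 : 0 ≤ q1 0 := hpos.2.1
      have step1 : (-(2 * c / 3)) * E ≤ (q1 0 - 2 * c / 3) * E := by
        apply mul_le_mul_of_nonneg_right _ hEpos.le
        linarith
      have step2 : (-(2 * c / 3)) * (1/2) ≤ (-(2 * c / 3)) * E := by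
        apply mul_le_mul_of_nonpos_left hEle
        linarith
      have : (-(2 * c / 3)) * (1/2) ≤ q1 t - 2 * c / 3 := by
        calc (-(2 * c / 3)) * (1/2) ≤ (-(2 * c / 3)) * E := step2
          _ ≤ (q1 0 - 2 * c / 3) * E := step1
          _ ≤ q1 t - 2 * c / 3 := key
      linarith
    -- M grows linearly, contradiction
    set d0 : ℝ := (M 0 - 1) * c / 6 with hd0def
    have hd0 : 0 < d0 := by
      simp only [hd0def]
      have : 0 < M 0 - 1 := by linarith
      positivity
    have hg : MonotoneOn (fun t => M t - d0 * t) (Set.Ici (1:ℝ)) := by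
      apply monotoneOn_of_deriv_nonneg (convex_Ici 1)
      · intro t ht
        exact ((hMc t (by linarith [mem_Ici.mp ht])).sub
          (continuousAt_const.mul continuousAt_id)).continuousWithinAt
      · intro t ht
        rw [interior_Ici] at ht
        have ht0 : (0:ℝ) ≤ t := by linarith [mem_Ioi.mp ht]
        exact (((hMder t ht0).sub ((hasDerivAt_id t).const_mul d0)).differentiableAt).differentiableWithinAt
      · intro t ht
        rw [interior_Ici] at ht
        have ht1 : (1:ℝ) ≤ t := (mem_Ioi.mp ht).le
        have ht0 : (0:ℝ) ≤ t := by linarith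
        have hd : HasDerivAt (fun t => M t - d0 * t) ((M t - 1) * q1 t / 2 - d0 * 1) t :=
          (hMder t ht0).sub ((hasDerivAt_id t).const_mul d0)
        rw [hd.deriv]
        have hM1 : M 0 ≤ M t := hmonoM self_mem_Ici ht0 ht0
        have hq1t := hq1low t ht1
        have h1 : (M 0 - 1) * (c / 3) ≤ (M t - 1) * q1 t := by
          apply mul_le_mul (by linarith) hq1t (by positivity) (by linarith [hMgt1 t ht0])
        simp only [hd0def]
        linarith
    set T : ℝ := 1 + 6 / d0 with hTdef
    have hT1 : (1:ℝ) ≤ T := by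
      simp only [hTdef]
      have : 0 < 6 / d0 := by positivity
      linarith
    have hgT : M 1 - d0 * 1 ≤ M T - d0 * T := hg self_mem_Ici hT1 hT1
    have hM1gt : 1 < M 1 := hMgt1 1 (by norm_num)
    have hd0T : d0 * T = d0 + 6 := by
      simp only [hTdef]
      field_simp
    have hMT : M T ≤ 2 := hMle2 T (by linarith)
    linarith
  -- q1 → 0
  have hq1tend : Filter.Tendsto q1 Filter.atTop (nhds 0) := by
    have hzero : Filter.Tendsto (fun _ : ℝ => (0:ℝ)) Filter.atTop (nhds 0) :=
      tendsto_const_nhds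
    have hupper : Filter.Tendsto (fun t => 2 - M t) Filter.atTop (nhds 0) := by
      have := (tendsto_const_nhds (x := (2:ℝ)) (f := Filter.atTop (α := ℝ))).sub htend
      rw [hLeq2] at this
      simpa using this
    apply tendsto_of_tendsto_of_tendsto_of_le_of_le' hzero hupper
    · filter_upwards [Filter.eventually_ge_atTop (0:ℝ)] with t ht
      exact hq1ge t ht
    · filter_upwards [Filter.eventually_ge_atTop (0:ℝ)] with t ht
      linarith [hwge t ht]
  refine ⟨fun s t hs hst => hmonoM hs (hs.trans hst) hst,
    fun t ht => ⟨hMgt1 t ht, hMle2 t ht⟩, ⟨L, hL1, hL2, htend⟩, hq1tend⟩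
end

section
/- Ratio comparison lemma for the k=1 mean-field model: suppose Δ, q₁ : [0,∞) → ℝ satisfy the system Δ' = -(q₁/2)(1-Δ) and q₁' = -Δ²/2 + Δ - (3/2)q₁, with 0 ≤ Δ(t) < 1 and q₁(t), Δ(t) > 0 for all t. Then r := q₁/Δ satisfies r' > (1-3r)/2, and consequently r(t) ≥ 1/3 + (r(0) - 1/3)e^{-3t/2} for all t ≥ 0. -/
theorem ratio_comparison_k1 (Δ q1 : ℝ → ℝ)
    (hrange : ∀ t ≥ (0 : ℝ), 0 < Δ t ∧ Δ t < 1 ∧ 0 < q1 t)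
    (hΔ : ∀ t ≥ (0 : ℝ), HasDerivAt Δ (-(q1 t / 2) * (1 - Δ t)) t)
    (hq1 : ∀ t ≥ (0 : ℝ), HasDerivAt q1 (-(Δ t) ^ 2 / 2 + Δ t - 3 / 2 * q1 t) t)
    (r : ℝ → ℝ) (hr : ∀ t, r t = q1 t / Δ t) :
    (∀ t ≥ (0 : ℝ),
      HasDerivAt r (1 - 3 / 2 * r t + 1 / 2 * (r t) ^ 2 - Δ t / 2 * (1 + (r t) ^ 2)) t ∧
      (1 - 3 * r t) / 2 <
        1 - 3 / 2 * r t + 1 / 2 * (r t) ^ 2 - Δ t / 2 * (1 + (r t) ^ 2)) ∧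
    (∀ t ≥ (0 : ℝ), 1 / 3 + (r 0 - 1 / 3) * Real.exp (-(3 / 2) * t) ≤ r t) := by
  have hfun : r = fun t => q1 t / Δ t := funext hr
  have key : ∀ t ≥ (0:ℝ), HasDerivAt r
      (1 - 3 / 2 * r t + 1 / 2 * (r t) ^ 2 - Δ t / 2 * (1 + (r t) ^ 2)) t := by
    intro t ht
    obtain ⟨h1, h2, h3⟩ := hrange t ht
    have hΔne : Δ t ≠ 0 := ne_of_gt h1
    have hd := (hq1 t ht).div (hΔ t ht) hΔne
    rw [show q1 / Δ = r from (funext hr).symm] at hd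
    refine hd.congr_deriv ?_
    rw [hr t]
    field_simp
    ring
  refine ⟨fun t ht => ⟨key t ht, ?_⟩, ?_⟩
  · obtain ⟨h1, h2, h3⟩ := hrange t ht
    nlinarith [sq_nonneg (r t), mul_pos (sub_pos.mpr h2) (by positivity : (0:ℝ) < 1 + (r t)^2)]
  · intro t ht
    set g : ℝ → ℝ := fun s => Real.exp (3/2 * s) * (r s - 1/3) with hg
    have hgderiv : ∀ s ≥ (0:ℝ), HasDerivAt g
        (Real.exp (3/2*s) * ((1 - Δ s) * (1 + (r s)^2) / 2)) s := by
      intro s hs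
      have he : HasDerivAt (fun u : ℝ => Real.exp (3/2*u)) (3/2 * Real.exp (3/2*s)) s := by
        simpa [Function.comp_def, mul_comm] using
          (Real.hasDerivAt_exp (3/2*s)).comp s ((hasDerivAt_id s).const_mul (3/2))
      have := he.mul ((key s hs).sub_const (1/3))
      refine this.congr_deriv ?_
      ring
    have hpos : ∀ s ∈ interior (Set.Ici (0:ℝ)), 0 < deriv g s := by
      intro s hs
      rw [interior_Ici] at hs
      have hs0 : (0:ℝ) ≤ s := le_of_lt hs
      rw [(hgderiv s hs0).deriv]
      obtain ⟨h1, h2, h3⟩ := hrange s hs0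
      have hE : 0 < (1 - Δ s) * (1 + (r s)^2) / 2 := by
        have : (0:ℝ) < 1 + (r s)^2 := by positivity
        have : 0 < (1 - Δ s) * (1 + (r s)^2) := mul_pos (sub_pos.mpr h2) this
        linarith
      exact mul_pos (Real.exp_pos _) hE
    have hcont : ContinuousOn g (Set.Ici 0) :=
      fun s hs => ((hgderiv s hs).continuousAt).continuousWithinAt
    have hmono : StrictMonoOn g (Set.Ici (0:ℝ)) :=
      strictMonoOn_of_deriv_pos (convex_Ici 0) hcont hpos
    have h0 : g 0 ≤ g t := by
      rcases eq_or_lt_of_le ht with h | h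
      · rw [← h]
      · exact le_of_lt (hmono Set.self_mem_Ici ht h)
    have hg0 : g 0 = r 0 - 1/3 := by simp [hg]
    rw [hg0] at h0
    have hgt : g t = Real.exp (3/2*t) * (r t - 1/3) := rfl
    rw [hgt] at h0
    have hexp : Real.exp (-(3/2)*t) * Real.exp (3/2*t) = 1 := by
      rw [← Real.exp_add]; norm_num
    have h2 := mul_le_mul_of_nonneg_left h0 (Real.exp_pos (-(3/2)*t)).le
    rw [← mul_assoc, hexp, one_mul] at h2
    linarith
end

section
/- Monotonicity of the mean near the extremes: with the setting of the mean evolution identity, if at time t the solution satisfies M(t) > 2k-1, then M'(t) ≥ 0; and if M(t) < 1, then M'(t) ≤ 0. Consequently, the sets {M > 2k-1} and {M < 1} are forward-invariant for the flow. -/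
/-!
The coefficient of `q_j` in `M'` is `k (j + M - 2k)` with `1 ≤ j ≤ 2k - 1`, so all coefficients are
nonnegative when `M > 2k - 1` and nonpositive when `M < 1`, while the `q_j` are nonnegative.
Forward invariance is a first-exit argument: before `M` first leaves `{M > 2k - 1}` we have
`M' ≥ 0`, so `M` is nondecreasing up to that time and cannot have dropped below `M 0`.
-/

open Set

noncomputable def meanDrift (k : ℕ) (m : ℝ) (q : ℕ → ℝ) : ℝ :=
  1 / (2 * (k : ℝ) ^ 2) *
    ∑ j ∈ Finset.Icc 1 (2 * k - 1), ((k : ℝ) * ((j : ℝ) + m) - 2 * (k : ℝ) ^ 2) * q j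

lemma meanDrift_coeff_eq (k : ℕ) (j m : ℝ) :
    (k : ℝ) * (j + m) - 2 * (k : ℝ) ^ 2 = k * (j + m - 2 * k) := by
  ring

lemma meanDrift_nonneg {k : ℕ} {m : ℝ} {q : ℕ → ℝ} (hq : ∀ n, 0 ≤ q n)
    (hm : 2 * (k : ℝ) - 1 < m) : 0 ≤ meanDrift k m q := by
  refine mul_nonneg (by positivity) (Finset.sum_nonneg fun j hj => mul_nonneg ?_ (hq j))
  have hj : (1 : ℝ) ≤ j := by exact_mod_cast (Finset.mem_Icc.1 hj).1
  rw [meanDrift_coeff_eq]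
  exact mul_nonneg k.cast_nonneg (by linarith)

lemma meanDrift_nonpos {k : ℕ} {m : ℝ} {q : ℕ → ℝ} (hq : ∀ n, 0 ≤ q n)
    (hm : m < 1) : meanDrift k m q ≤ 0 := by
  refine mul_nonpos_of_nonneg_of_nonpos (by positivity)
    (Finset.sum_nonpos fun j hj => mul_nonpos_of_nonpos_of_nonneg ?_ (hq j))
  have hj : (j : ℝ) + 1 ≤ 2 * k := by
    have := Finset.mem_Icc.1 hj
    exact_mod_cast (show j + 1 ≤ 2 * k by omega)
  rw [meanDrift_coeff_eq]
  exact mul_nonpos_of_nonneg_of_nonpos k.cast_nonneg (by linarith)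

lemma lt_of_hasDerivAt_nonneg_on_superlevel {f f' : ℝ → ℝ} {a c : ℝ}
    (hf : ∀ x ≥ a, HasDerivAt f (f' x) x) (hf' : ∀ x ≥ a, c < f x → 0 ≤ f' x)
    (ha : c < f a) : ∀ x ≥ a, c < f x := by
  intro x hx
  by_contra! hxc
  have hcont : ContinuousOn f (Icc a x) := fun y hy =>
    (hf y hy.1).continuousAt.continuousWithinAt
  have hexit : IsCompact (Icc a x ∩ f ⁻¹' Iic c) :=
    isCompact_Icc.of_isClosed_subset
      (hcont.preimage_isClosed_of_isClosed isClosed_Icc isClosed_Iic) inter_subset_left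
  obtain ⟨u, ⟨hu, hfu⟩, hfirst⟩ := hexit.exists_isLeast ⟨x, ⟨hx, le_rfl⟩, hxc⟩
  have hbefore : ∀ y ∈ Ico a u, c < f y := fun y hy => by
    by_contra! hyc
    exact (hfirst ⟨⟨hy.1, hy.2.le.trans hu.2⟩, hyc⟩).not_gt hy.2
  have hmono : MonotoneOn f (Icc a u) := by
    refine monotoneOn_of_hasDerivWithinAt_nonneg (f' := f') (convex_Icc a u)
      (hcont.mono (Icc_subset_Icc_right hu.2)) ?_ ?_ <;> rw [interior_Icc] <;> intro y hy
    · exact (hf y hy.1.le).hasDerivWithinAt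
    · exact hf' y hy.1.le (hbefore y (Ioo_subset_Ico_self hy))
  linarith [hmono (left_mem_Icc.2 hu.1) (right_mem_Icc.2 hu.1) hu.1, show f u ≤ c from hfu]

lemma lt_of_hasDerivAt_nonpos_on_sublevel {f f' : ℝ → ℝ} {a c : ℝ}
    (hf : ∀ x ≥ a, HasDerivAt f (f' x) x) (hf' : ∀ x ≥ a, f x < c → f' x ≤ 0)
    (ha : f a < c) : ∀ x ≥ a, f x < c := by
  have := lt_of_hasDerivAt_nonneg_on_superlevel (f := -f) (f' := -f') (c := -c)
    (fun x hx => (hf x hx).neg) (fun x hx hfx => neg_nonneg.2 (hf' x hx (neg_lt_neg_iff.1 hfx)))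
    (neg_lt_neg ha)
  exact fun x hx => neg_lt_neg_iff.1 (this x hx)

theorem mean_monotone_near_extremes_general (k : ℕ)
    (q : ℝ → ℕ → ℝ) (M M' : ℝ → ℝ)
    (hpos : ∀ t n, 0 ≤ q t n)
    (hderiv : ∀ t ≥ (0 : ℝ), HasDerivAt M (M' t) t)
    (hformula : ∀ t, M' t = 1 / (2 * (k : ℝ) ^ 2) *
      ∑ j ∈ Finset.Icc 1 (2 * k - 1), ((k : ℝ) * ((j : ℝ) + M t) - 2 * (k : ℝ) ^ 2) * q t j) :
    (∀ t ≥ (0 : ℝ), 2 * (k : ℝ) - 1 < M t → 0 ≤ M' t) ∧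
    (∀ t ≥ (0 : ℝ), M t < 1 → M' t ≤ 0) ∧
    (2 * (k : ℝ) - 1 < M 0 → ∀ t ≥ (0 : ℝ), 2 * (k : ℝ) - 1 < M t) ∧
    (M 0 < 1 → ∀ t ≥ (0 : ℝ), M t < 1) := by
  have hup : ∀ t ≥ (0 : ℝ), 2 * (k : ℝ) - 1 < M t → 0 ≤ M' t := fun t _ hM =>
    (hformula t).trans_ge (meanDrift_nonneg (hpos t) hM)
  have hdown : ∀ t ≥ (0 : ℝ), M t < 1 → M' t ≤ 0 := fun t _ hM =>
    (hformula t).trans_le (meanDrift_nonpos (hpos t) hM)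
  exact ⟨hup, hdown, lt_of_hasDerivAt_nonneg_on_superlevel hderiv hup,
    lt_of_hasDerivAt_nonpos_on_sublevel hderiv hdown⟩

theorem mean_monotone_near_extremes (k : ℕ) (hk : 1 ≤ k)
    (q : ℝ → ℕ → ℝ) (M M' : ℝ → ℝ)
    (hpos : ∀ t n, 0 ≤ q t n)
    (hMbound : ∀ t, 0 ≤ M t ∧ M t ≤ 2 * (k : ℝ))
    (hderiv : ∀ t ≥ (0 : ℝ), HasDerivAt M (M' t) t)
    (hformula : ∀ t, M' t = 1 / (2 * (k : ℝ) ^ 2) *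
      ∑ j ∈ Finset.Icc 1 (2 * k - 1), ((k : ℝ) * ((j : ℝ) + M t) - 2 * (k : ℝ) ^ 2) * q t j) :
    (∀ t ≥ (0 : ℝ), 2 * (k : ℝ) - 1 < M t → 0 ≤ M' t) ∧
    (∀ t ≥ (0 : ℝ), M t < 1 → M' t ≤ 0) ∧
    (2 * (k : ℝ) - 1 < M 0 → ∀ t ≥ (0 : ℝ), 2 * (k : ℝ) - 1 < M t) ∧
    (M 0 < 1 → ∀ t ≥ (0 : ℝ), M t < 1) :=
  mean_monotone_near_extremes_general k q M M' hpos hderiv hformula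
end

section
/- Exponential convergence from symmetric data: if q : [0,∞) → ℝ^{2k+1} solves the linear system q' = Lq where L is the tridiagonal matrix with off-diagonal entries 1/2, interior diagonal entries -1, and corner diagonal entries -1/2, and q(0) is a probability vector, then ‖q(t) - q^u‖_{ℓ²} ≤ e^{-t/(8(2k+1)²)}·‖q(0) - q^u‖_{ℓ²} for all t ≥ 0, where q^u = (1/(2k+1),…,1/(2k+1)). -/
open Finset

noncomputable def ecs_ext (k : ℕ) (v : Fin (2 * k + 1) → ℝ) : ℕ → ℝ :=
  fun n => if h : n < 2 * k + 1 then v ⟨n, h⟩ else 0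

lemma ecs_mulVec (k : ℕ) (hk : 1 ≤ k)
    (L : Matrix (Fin (2 * k + 1)) (Fin (2 * k + 1)) ℝ)
    (hL : ∀ i j : Fin (2 * k + 1),
      L i j = if (i : ℕ) = (j : ℕ) then
          (if (i : ℕ) = 0 ∨ (i : ℕ) = 2 * k then -(1 / 2 : ℝ) else -1)
        else if (i : ℕ) + 1 = (j : ℕ) ∨ (j : ℕ) + 1 = (i : ℕ) then (1 / 2 : ℝ) else 0)
    (v : Fin (2 * k + 1) → ℝ) (i : Fin (2 * k + 1)) :
    L.mulVec v i = (1 / 2) *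
      ((if (i : ℕ) = 0 then 0 else ecs_ext k v ((i : ℕ) - 1) - ecs_ext k v i) +
       (if (i : ℕ) = 2 * k then 0 else ecs_ext k v ((i : ℕ) + 1) - ecs_ext k v i)) := by
  classical
  have ha : (i : ℕ) < 2 * k + 1 := i.isLt
  set Y := ecs_ext k v with hY
  have hYv : ∀ j : Fin (2 * k + 1), v j = Y j := by
    intro j; simp [hY, ecs_ext, j.isLt]
  have key : L.mulVec v i = ∑ n ∈ range (2 * k + 1),
      ((if n = (i:ℕ) then (if (i:ℕ) = 0 ∨ (i:ℕ) = 2 * k then -(1/2:ℝ) else -1) * Y (i:ℕ) else 0) +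
        ((if n = (i:ℕ) + 1 then (1/2:ℝ) * Y n else 0) + (if n + 1 = (i:ℕ) then (1/2:ℝ) * Y n else 0))) := by
    show (∑ j, L i j * v j) = _
    rw [← Fin.sum_univ_eq_sum_range (fun n =>
      ((if n = (i:ℕ) then (if (i:ℕ) = 0 ∨ (i:ℕ) = 2 * k then -(1/2:ℝ) else -1) * Y (i:ℕ) else 0) +
        ((if n = (i:ℕ) + 1 then (1/2:ℝ) * Y n else 0) + (if n + 1 = (i:ℕ) then (1/2:ℝ) * Y n else 0))))]
    refine Finset.sum_congr rfl fun j _ => ?_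
    rw [hL i j, hYv j]
    obtain ⟨a, hai⟩ := i
    obtain ⟨n, hn⟩ := j
    simp only [Fin.val_mk] at *
    split_ifs <;> first | ring1 | (exfalso; omega) | (subst_vars; ring1)
  rw [key, Finset.sum_add_distrib, Finset.sum_add_distrib]
  have s1 : (∑ n ∈ range (2*k+1), if n = (i:ℕ) then (if (i:ℕ) = 0 ∨ (i:ℕ) = 2 * k then -(1/2:ℝ) else -1) * Y (i:ℕ) else 0) = (if (i:ℕ) = 0 ∨ (i:ℕ) = 2 * k then -(1/2:ℝ) else -1) * Y (i:ℕ) := by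
    rw [Finset.sum_ite_eq' (range (2*k+1)) (i:ℕ)]
    simp [ha]
  have s2 : (∑ n ∈ range (2*k+1), if n = (i:ℕ) + 1 then (1/2:ℝ) * Y n else 0) = (1/2:ℝ) * Y ((i:ℕ)+1) := by
    rw [Finset.sum_ite_eq' (range (2*k+1)) ((i:ℕ)+1)]
    by_cases h : (i:ℕ) + 1 < 2*k+1
    · simp [Finset.mem_range, h]
    · have h2 : Y ((i:ℕ)+1) = 0 := by
        rw [hY]; unfold ecs_ext; rw [dif_neg (by omega)]
      simp [Finset.mem_range, h, h2]
  have s3 : (∑ n ∈ range (2*k+1), if n + 1 = (i:ℕ) then (1/2:ℝ) * Y n else 0) = if (i:ℕ) = 0 then 0 else (1/2:ℝ) * Y ((i:ℕ)-1) := by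
    rcases Nat.eq_zero_or_pos (i:ℕ) with h0 | h0
    · simp [h0]
    · have he : ∀ n : ℕ, (n + 1 = (i:ℕ)) = (n = (i:ℕ) - 1) := by intro n; rw [eq_iff_iff]; omega
      simp only [he]
      rw [Finset.sum_ite_eq' (range (2*k+1)) ((i:ℕ)-1), if_pos (by rw [Finset.mem_range]; omega), if_neg (by omega)]
  rw [s1, s2, s3]
  have hYa1 : (i:ℕ) = 2 * k → Y ((i:ℕ) + 1) = 0 := by
    intro h; rw [hY]; unfold ecs_ext; rw [dif_neg (by omega)]
  have hk0 : k ≠ 0 := by omega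
  by_cases h0 : (i:ℕ) = 0
  · have h2k : ¬ ((i:ℕ) = 2 * k) := by omega
    simp only [h0, h2k]
    simp [hk0]
    ring
  · by_cases h2k : (i:ℕ) = 2 * k
    · rw [hYa1 h2k]
      simp only [h2k]
      simp [h0, hk0]
      ring
    · rw [if_neg (by tauto)]
      simp [h0, h2k]
      ring

lemma ecs_sum_mulVec (k : ℕ) (hk : 1 ≤ k)
    (L : Matrix (Fin (2 * k + 1)) (Fin (2 * k + 1)) ℝ)
    (hL : ∀ i j : Fin (2 * k + 1),
      L i j = if (i : ℕ) = (j : ℕ) then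
          (if (i : ℕ) = 0 ∨ (i : ℕ) = 2 * k then -(1 / 2 : ℝ) else -1)
        else if (i : ℕ) + 1 = (j : ℕ) ∨ (j : ℕ) + 1 = (i : ℕ) then (1 / 2 : ℝ) else 0)
    (v : Fin (2 * k + 1) → ℝ) :
    ∑ i, L.mulVec v i = 0 := by
  classical
  set Y := ecs_ext k v with hY
  have step : ∑ i, L.mulVec v i = ∑ a ∈ range (2*k+1),
      (1/2) * ((if a = 0 then 0 else Y (a-1) - Y a) + (if a = 2*k then 0 else Y (a+1) - Y a)) := by
    rw [← Fin.sum_univ_eq_sum_range (fun a =>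
      (1/2) * ((if a = 0 then 0 else Y (a-1) - Y a) + (if a = 2*k then 0 else Y (a+1) - Y a)))]
    exact Finset.sum_congr rfl fun i _ => ecs_mulVec k hk L hL v i
  rw [step, ← Finset.mul_sum, Finset.sum_add_distrib]
  have t1 : (∑ a ∈ range (2*k+1), if a = 0 then 0 else Y (a-1) - Y a) = Y 0 - Y (2*k) := by
    rw [Finset.sum_range_succ' (fun a => if a = 0 then (0:ℝ) else Y (a-1) - Y a) (2*k)]
    simp only [Nat.succ_ne_zero, if_false, eq_self_iff_true, if_true, Nat.add_sub_cancel, add_zero]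
    exact Finset.sum_range_sub' (fun n => Y n) (2*k)
  have t2 : (∑ a ∈ range (2*k+1), if a = 2*k then 0 else Y (a+1) - Y a) = Y (2*k) - Y 0 := by
    rw [Finset.sum_range_succ (fun a => if a = 2*k then (0:ℝ) else Y (a+1) - Y a) (2*k)]
    rw [if_pos rfl, add_zero]
    rw [Finset.sum_congr rfl (fun a ha => if_neg (by simp at ha; omega))]
    exact Finset.sum_range_sub (fun n => Y n) (2*k)
  rw [t1, t2]; ring

lemma ecs_dirichlet (k : ℕ) (hk : 1 ≤ k)
    (L : Matrix (Fin (2 * k + 1)) (Fin (2 * k + 1)) ℝ)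
    (hL : ∀ i j : Fin (2 * k + 1),
      L i j = if (i : ℕ) = (j : ℕ) then
          (if (i : ℕ) = 0 ∨ (i : ℕ) = 2 * k then -(1 / 2 : ℝ) else -1)
        else if (i : ℕ) + 1 = (j : ℕ) ∨ (j : ℕ) + 1 = (i : ℕ) then (1 / 2 : ℝ) else 0)
    (v : Fin (2 * k + 1) → ℝ) :
    ∑ i, L.mulVec v i * v i
      = -(1/2) * ∑ n ∈ range (2*k), (ecs_ext k v (n+1) - ecs_ext k v n)^2 := by
  classical
  set Y := ecs_ext k v with hY
  have hYv : ∀ j : Fin (2 * k + 1), v j = Y j := by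
    intro j; simp [hY, ecs_ext, j.isLt]
  have step : ∑ i, L.mulVec v i * v i = ∑ a ∈ range (2*k+1),
      (1/2) * (((if a = 0 then 0 else Y (a-1) - Y a)) * Y a + ((if a = 2*k then 0 else Y (a+1) - Y a)) * Y a) := by
    rw [← Fin.sum_univ_eq_sum_range (fun a =>
      (1/2) * (((if a = 0 then 0 else Y (a-1) - Y a)) * Y a + ((if a = 2*k then 0 else Y (a+1) - Y a)) * Y a))]
    refine Finset.sum_congr rfl fun i _ => ?_
    rw [ecs_mulVec k hk L hL v i, hYv i]
    ring
  rw [step, ← Finset.mul_sum, Finset.sum_add_distrib]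
  have t1 : (∑ a ∈ range (2*k+1), (if a = 0 then (0:ℝ) else Y (a-1) - Y a) * Y a)
      = ∑ n ∈ range (2*k), (Y n - Y (n+1)) * Y (n+1) := by
    rw [Finset.sum_range_succ' (fun a => (if a = 0 then (0:ℝ) else Y (a-1) - Y a) * Y a) (2*k)]
    simp only [Nat.succ_ne_zero, if_false, eq_self_iff_true, if_true, Nat.add_sub_cancel, zero_mul, add_zero]
  have t2 : (∑ a ∈ range (2*k+1), (if a = 2*k then (0:ℝ) else Y (a+1) - Y a) * Y a)
      = ∑ n ∈ range (2*k), (Y (n+1) - Y n) * Y n := by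
    rw [Finset.sum_range_succ (fun a => (if a = 2*k then (0:ℝ) else Y (a+1) - Y a) * Y a) (2*k)]
    rw [if_pos rfl, zero_mul, add_zero]
    exact Finset.sum_congr rfl (fun a ha => by rw [if_neg (by simp at ha; omega)])
  rw [t1, t2, ← Finset.sum_add_distrib]
  have hfin : (∑ n ∈ range (2*k), ((Y n - Y (n+1)) * Y (n+1) + (Y (n+1) - Y n) * Y n))
      = -∑ n ∈ range (2*k), (Y (n+1) - Y n)^2 := by
    rw [← Finset.sum_neg_distrib]
    exact Finset.sum_congr rfl (fun n _ => by ring)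
  rw [hfin]
  ring

lemma ecs_poincare (m : ℕ) (Y : ℕ → ℝ) (h0 : ∑ n ∈ range (m+1), Y n = 0) :
    ∑ n ∈ range (m+1), (Y n)^2 ≤ ((m:ℝ)+1)^2 * ∑ n ∈ range m, (Y (n+1) - Y n)^2 := by
  classical
  set D := ∑ n ∈ range m, (Y (n+1) - Y n)^2 with hD
  have hD0 : 0 ≤ D := Finset.sum_nonneg (fun n _ => sq_nonneg _)
  -- pairwise bound
  have pair : ∀ i j : ℕ, i ≤ j → j ≤ m → (Y j - Y i)^2 ≤ ((m:ℝ)+1) * D := by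
    intro i j hij hjm
    have tele : Y j - Y i = ∑ n ∈ Ico i j, (Y (n+1) - Y n) := by
      rw [Finset.sum_Ico_eq_sub _ hij, Finset.sum_range_sub (fun n => Y n), Finset.sum_range_sub (fun n => Y n)]
      ring
    have cs : (∑ n ∈ Ico i j, (Y (n+1) - Y n))^2
        ≤ (∑ n ∈ Ico i j, (1:ℝ)^2) * ∑ n ∈ Ico i j, (Y (n+1) - Y n)^2 := by
      have := Finset.sum_mul_sq_le_sq_mul_sq (Ico i j) (fun _ => (1:ℝ)) (fun n => Y (n+1) - Y n)
      simpa using this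
    have hcard : (∑ n ∈ Ico i j, (1:ℝ)^2) = ((j - i : ℕ) : ℝ) := by
      simp [Nat.card_Ico]
    have hsub : (∑ n ∈ Ico i j, (Y (n+1) - Y n)^2) ≤ D := by
      apply Finset.sum_le_sum_of_subset_of_nonneg
      · intro n hn
        simp only [Finset.mem_Ico] at hn
        simp only [Finset.mem_range]
        omega
      · intro n _ _; exact sq_nonneg _
    have hji : ((j - i : ℕ) : ℝ) ≤ (m:ℝ) + 1 := by
      have : (j - i : ℕ) ≤ m + 1 := by omega
      exact_mod_cast this
    calc (Y j - Y i)^2 = (∑ n ∈ Ico i j, (Y (n+1) - Y n))^2 := by rw [tele]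
      _ ≤ (∑ n ∈ Ico i j, (1:ℝ)^2) * ∑ n ∈ Ico i j, (Y (n+1) - Y n)^2 := cs
      _ = ((j - i : ℕ) : ℝ) * ∑ n ∈ Ico i j, (Y (n+1) - Y n)^2 := by rw [hcard]
      _ ≤ ((m:ℝ)+1) * D := by
          apply mul_le_mul hji hsub (Finset.sum_nonneg (fun n _ => sq_nonneg _))
          positivity
  have pair' : ∀ i ∈ range (m+1), ∀ j ∈ range (m+1), (Y j - Y i)^2 ≤ ((m:ℝ)+1) * D := by
    intro i hi j hj
    simp only [Finset.mem_range] at hi hj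
    rcases le_total i j with h | h
    · exact pair i j h (by omega)
    · rw [show (Y j - Y i)^2 = (Y i - Y j)^2 by ring]
      exact pair j i h (by omega)
  -- double sum identity
  set S2 := ∑ n ∈ range (m+1), (Y n)^2 with hS2
  have inner : ∀ i ∈ range (m+1), ∑ j ∈ range (m+1), (Y j - Y i)^2
      = S2 + ((m:ℝ)+1) * (Y i)^2 := by
    intro i _
    have expand : ∀ j ∈ range (m+1), (Y j - Y i)^2 = (Y j)^2 - 2 * Y i * Y j + (Y i)^2 := by
      intro j _; ring
    rw [Finset.sum_congr rfl expand]
    rw [Finset.sum_add_distrib, Finset.sum_sub_distrib, ← Finset.mul_sum, h0]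
    simp [Finset.card_range]
    try push_cast
    try ring
  have double : ∑ i ∈ range (m+1), ∑ j ∈ range (m+1), (Y j - Y i)^2
      = 2 * ((m:ℝ)+1) * S2 := by
    rw [Finset.sum_congr rfl inner, Finset.sum_add_distrib, ← Finset.mul_sum]
    simp only [Finset.sum_const, Finset.card_range, nsmul_eq_mul, ← hS2]
    push_cast
    ring
  have bound : ∑ i ∈ range (m+1), ∑ j ∈ range (m+1), (Y j - Y i)^2
      ≤ ((m:ℝ)+1) * (((m:ℝ)+1) * (((m:ℝ)+1) * D)) := by
    calc ∑ i ∈ range (m+1), ∑ j ∈ range (m+1), (Y j - Y i)^2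
        ≤ ∑ i ∈ range (m+1), ∑ j ∈ range (m+1), ((m:ℝ)+1) * D := by
          apply Finset.sum_le_sum
          intro i hi
          exact Finset.sum_le_sum (fun j hj => pair' i hi j hj)
      _ = ((m:ℝ)+1) * (((m:ℝ)+1) * (((m:ℝ)+1) * D)) := by
          simp only [Finset.sum_const, Finset.card_range, nsmul_eq_mul]
          push_cast
          ring
  have key : 2 * ((m:ℝ)+1) * S2 ≤ ((m:ℝ)+1) * (((m:ℝ)+1) * (((m:ℝ)+1) * D)) := by
    rw [← double]; exact bound
  have hM : (0:ℝ) < (m:ℝ) + 1 := by positivity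
  have h2 : (0:ℝ) < 2 * ((m:ℝ)+1) := by linarith
  have h3 : 2 * ((m:ℝ)+1) * S2 ≤ 2 * ((m:ℝ)+1) * (((m:ℝ)+1)^2 * D) := by
    nlinarith [key, mul_nonneg (mul_nonneg (mul_nonneg hM.le hM.le) hM.le) hD0]
  exact le_of_mul_le_mul_left h3 h2

theorem exponential_convergence_symmetric (k : ℕ) (hk : 1 ≤ k)
    (L : Matrix (Fin (2 * k + 1)) (Fin (2 * k + 1)) ℝ)
    (hL : ∀ i j : Fin (2 * k + 1),
      L i j = if (i : ℕ) = (j : ℕ) then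
          (if (i : ℕ) = 0 ∨ (i : ℕ) = 2 * k then -(1 / 2 : ℝ) else -1)
        else if (i : ℕ) + 1 = (j : ℕ) ∨ (j : ℕ) + 1 = (i : ℕ) then (1 / 2 : ℝ) else 0)
    (q : ℝ → Fin (2 * k + 1) → ℝ)
    (hq : ∀ (i : Fin (2 * k + 1)) (t : ℝ), 0 ≤ t →
      HasDerivAt (fun s => q s i) (L.mulVec (q t) i) t)
    (hpos : ∀ i, 0 ≤ q 0 i) (hsum : ∑ i, q 0 i = 1) :
    ∀ t ≥ (0 : ℝ),
      Real.sqrt (∑ i, (q t i - 1 / (2 * (k : ℝ) + 1)) ^ 2) ≤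
        Real.exp (-t / (8 * (2 * (k : ℝ) + 1) ^ 2)) *
          Real.sqrt (∑ i, (q 0 i - 1 / (2 * (k : ℝ) + 1)) ^ 2) := by
  classical
  intro t ht
  have hNpos : (0:ℝ) < 2 * (k:ℝ) + 1 := by positivity
  set u : ℝ := 1 / (2 * (k:ℝ) + 1) with hu
  -- row sums of L are zero
  have hrow : ∀ i : Fin (2*k+1), (∑ j, L i j) = 0 := by
    intro i
    have h1 : L.mulVec (fun _ => (1:ℝ)) i = ∑ j, L i j := by
      simp [Matrix.mulVec, dotProduct]
    rw [← h1, ecs_mulVec k hk L hL]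
    have hext : ∀ n, n < 2*k+1 → ecs_ext k (fun _ => (1:ℝ)) n = 1 := by
      intro n h; simp [ecs_ext, h]
    by_cases h0 : (i:ℕ) = 0
    · have h2k : ¬((i:ℕ) = 2*k) := by omega
      rw [if_pos h0, if_neg h2k, hext ((i:ℕ)+1) (by omega), hext (i:ℕ) i.isLt]
      ring
    · by_cases h2k : (i:ℕ) = 2*k
      · rw [if_neg h0, if_pos h2k, hext ((i:ℕ)-1) (by omega), hext (i:ℕ) i.isLt]
        ring
      · rw [if_neg h0, if_neg h2k, hext ((i:ℕ)-1) (by omega), hext ((i:ℕ)+1) (by omega),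
          hext (i:ℕ) i.isLt]
        ring
  -- mulVec of q equals mulVec of centered vector
  set x : ℝ → Fin (2*k+1) → ℝ := fun s i => q s i - u with hx
  have hLqx : ∀ s : ℝ, ∀ i, L.mulVec (q s) i = L.mulVec (x s) i := by
    intro s i
    show (∑ j, L i j * q s j) = ∑ j, L i j * x s j
    have : ∀ j : Fin (2*k+1), L i j * q s j = L i j * x s j + L i j * u := by
      intro j; simp only [hx]; ring
    rw [Finset.sum_congr rfl (fun j _ => this j), Finset.sum_add_distrib, ← Finset.sum_mul,
      hrow i]
    ring
  -- conservation of total mass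
  have hS : ∀ s : ℝ, 0 ≤ s → (∑ i, q s i) = 1 := by
    intro s hs
    have hS' : ∀ r : ℝ, 0 ≤ r → HasDerivAt (fun y => ∑ i, q y i) 0 r := by
      intro r hr
      have := HasDerivAt.fun_sum (fun i (_ : i ∈ Finset.univ) => hq i r hr)
      rwa [ecs_sum_mulVec k hk L hL (q r)] at this
    have := constant_of_has_deriv_right_zero (f := fun y => ∑ i, q y i) (a := 0) (b := s)
      (fun r hr => ((hS' r hr.1).continuousAt).continuousWithinAt)
      (fun r hr => ((hS' r hr.1).hasDerivWithinAt))
      s (Set.mem_Icc.mpr ⟨hs, le_refl s⟩)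
    have h2 : (∑ i, q s i) = ∑ i, q 0 i := this
    rw [h2]; exact hsum
  -- extended centered vector has mean zero
  have hNu : (((2*k+1 : ℕ)):ℝ) * u = 1 := by
    rw [hu]; push_cast; field_simp
  have hmean : ∀ s : ℝ, 0 ≤ s → ∑ n ∈ range (2*k+1), ecs_ext k (x s) n = 0 := by
    intro s hs
    have h1 : ∑ n ∈ range (2*k+1), ecs_ext k (x s) n = ∑ i : Fin (2*k+1), x s i := by
      rw [← Fin.sum_univ_eq_sum_range (fun n => ecs_ext k (x s) n)]
      exact Finset.sum_congr rfl (fun i _ => by simp [ecs_ext, i.isLt])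
    rw [h1]
    simp only [hx]
    rw [Finset.sum_sub_distrib, hS s hs, Finset.sum_const, Finset.card_univ, Fintype.card_fin,
      nsmul_eq_mul, hNu]
    ring
  -- the energy function and its derivative
  set f : ℝ → ℝ := fun s => ∑ i, (q s i - u)^2 with hf
  set f' : ℝ → ℝ := fun s => ∑ i, (2:ℝ) * (q s i - u) * L.mulVec (q s) i with hf'
  have hfd : ∀ s : ℝ, 0 ≤ s → HasDerivAt f (f' s) s := by
    intro s hs
    have : ∀ i : Fin (2*k+1), i ∈ Finset.univ → HasDerivAt (fun y => (q y i - u)^2)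
        ((2:ℝ) * (q s i - u) * L.mulVec (q s) i) s := by
      intro i _
      have h1 := ((hq i s hs).sub_const u).fun_pow 2
      simpa using h1
    exact HasDerivAt.fun_sum this
  have hfnonneg : ∀ s : ℝ, 0 ≤ f s := fun s => Finset.sum_nonneg (fun i _ => sq_nonneg _)
  -- key derivative bound
  have hkey : ∀ s : ℝ, 0 ≤ s → f' s ≤ -(1 / (2*(k:ℝ)+1)^2) * f s := by
    intro s hs
    have hdir : f' s = -(∑ n ∈ range (2*k), (ecs_ext k (x s) (n+1) - ecs_ext k (x s) n)^2) := by
      have h1 : f' s = 2 * ∑ i, L.mulVec (x s) i * x s i := by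
        rw [hf', Finset.mul_sum]
        exact Finset.sum_congr rfl (fun i _ => by rw [hLqx s i]; simp only [hx]; ring)
      rw [h1, ecs_dirichlet k hk L hL (x s)]
      ring
    have hpoin : f s ≤ (2*(k:ℝ)+1)^2 * ∑ n ∈ range (2*k), (ecs_ext k (x s) (n+1) - ecs_ext k (x s) n)^2 := by
      have h2 := ecs_poincare (2*k) (ecs_ext k (x s)) (hmean s hs)
      have h3 : f s = ∑ n ∈ range (2*k+1), (ecs_ext k (x s) n)^2 := by
        rw [hf, ← Fin.sum_univ_eq_sum_range (fun n => (ecs_ext k (x s) n)^2)]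
        exact Finset.sum_congr rfl (fun i _ => by simp [ecs_ext, i.isLt, hx])
      have h4 : ((2*k : ℕ):ℝ) + 1 = 2*(k:ℝ)+1 := by push_cast; ring
      rw [h3]
      calc ∑ n ∈ range (2*k+1), (ecs_ext k (x s) n)^2
          ≤ (((2*k:ℕ):ℝ)+1)^2 * ∑ n ∈ range (2*k), (ecs_ext k (x s) (n+1) - ecs_ext k (x s) n)^2 := h2
        _ = (2*(k:ℝ)+1)^2 * ∑ n ∈ range (2*k), (ecs_ext k (x s) (n+1) - ecs_ext k (x s) n)^2 := by rw [h4]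
    rw [hdir]
    have hN2 : (0:ℝ) < (2*(k:ℝ)+1)^2 := by positivity
    rw [show -(1/(2*(k:ℝ)+1)^2) * f s = -(f s / (2*(k:ℝ)+1)^2) by ring,
      neg_le_neg_iff, div_le_iff₀ hN2]
    linarith [hpoin]
  -- Gronwall
  set c : ℝ := 1 / (8 * (2*(k:ℝ)+1)^2) with hc
  have hcpos : 0 < c := by rw [hc]; positivity
  have hc2 : 2 * c ≤ 1 / (2*(k:ℝ)+1)^2 := by
    have hN2 : (0:ℝ) < (2*(k:ℝ)+1)^2 := by positivity
    rw [hc, mul_one_div, div_le_div_iff₀ (by positivity) hN2]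
    nlinarith [hN2]
  set g : ℝ → ℝ := fun s => f s * Real.exp (2*c*s) with hg
  have hgd : ∀ s : ℝ, 0 ≤ s → HasDerivAt g (f' s * Real.exp (2*c*s) + f s * (Real.exp (2*c*s) * (2*c))) s := by
    intro s hs
    have hexp : HasDerivAt (fun y => Real.exp (2*c*y)) (Real.exp (2*c*s) * (2*c)) s := by
      simpa using (((hasDerivAt_id s).const_mul (2*c)).exp)
    exact (hfd s hs).mul hexp
  have hderiv_nonpos : ∀ s : ℝ, 0 ≤ s →
      f' s * Real.exp (2*c*s) + f s * (Real.exp (2*c*s) * (2*c)) ≤ 0 := by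
    intro s hs
    have he : 0 < Real.exp (2*c*s) := Real.exp_pos _
    have h1 : f' s + 2*c * f s ≤ 0 := by
      have := hkey s hs
      have h2 : 2*c * f s ≤ (1/(2*(k:ℝ)+1)^2) * f s :=
        mul_le_mul_of_nonneg_right hc2 (hfnonneg s)
      linarith
    calc f' s * Real.exp (2*c*s) + f s * (Real.exp (2*c*s) * (2*c))
        = (f' s + 2*c * f s) * Real.exp (2*c*s) := by ring
      _ ≤ 0 * Real.exp (2*c*s) := mul_le_mul_of_nonneg_right h1 he.le
      _ = 0 := by ring
  have hanti : AntitoneOn g (Set.Ici (0:ℝ)) := by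
    apply antitoneOn_of_deriv_nonpos (convex_Ici 0)
    · exact fun s hs => ((hgd s hs).continuousAt).continuousWithinAt
    · intro s hs
      rw [interior_Ici] at hs
      exact ((hgd s (le_of_lt hs)).differentiableAt).differentiableWithinAt
    · intro s hs
      rw [interior_Ici] at hs
      rw [(hgd s (le_of_lt hs)).deriv]
      exact hderiv_nonpos s (le_of_lt hs)
  have hgt : g t ≤ g 0 := hanti (Set.mem_Ici.mpr (le_refl 0)) (Set.mem_Ici.mpr ht) ht
  have hg0 : g 0 = f 0 := by simp [hg]
  have hft : f t ≤ Real.exp (-(2*c*t)) * f 0 := by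
    have h1 : f t * Real.exp (2*c*t) ≤ f 0 := by
      have h0 := hgt
      rw [hg0] at h0
      exact h0
    have he : (0:ℝ) < Real.exp (2*c*t) := Real.exp_pos _
    rw [Real.exp_neg]
    rw [← le_div_iff₀ he] at h1
    rwa [div_eq_inv_mul] at h1
  -- conclude with square roots
  have hsq : Real.sqrt (f t) ≤ Real.exp (-(c*t)) * Real.sqrt (f 0) := by
    have h1 : Real.sqrt (f t) ≤ Real.sqrt (Real.exp (-(2*c*t)) * f 0) :=
      Real.sqrt_le_sqrt hft
    rw [Real.sqrt_mul (Real.exp_nonneg _)] at h1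
    have h2 : Real.sqrt (Real.exp (-(2*c*t))) = Real.exp (-(c*t)) := by
      rw [show Real.exp (-(2*c*t)) = (Real.exp (-(c*t)))^2 by
        rw [sq, ← Real.exp_add]; ring_nf]
      exact Real.sqrt_sq (Real.exp_nonneg _)
    rwa [h2] at h1
  have hexp_eq : Real.exp (-t / (8*(2*(k:ℝ)+1)^2)) = Real.exp (-(c*t)) := by
    congr 1
    rw [hc]; field_simp
  rw [hexp_eq]
  exact hsq
end

section
/- Preservation of symmetry: if q : ℝ → ℝ^{2k+1} solves the nonlinear shifted mean-field system with ∑ₙ qₙ(0) = 1 and the symmetry qₙ(0) = q_{2k-n}(0) for all n, then the symmetric part dynamics coincide with those of the flipped solution; by uniqueness of solutions to the (locally Lipschitz) ODE system, qₙ(t) = q_{2k-n}(t) for all t ≥ 0 and all n, and in particular M(t) = k for all t. -/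
/-- The vector of symmetry defects. -/
def Fvec (k : ℕ) (q : ℝ → ℕ → ℝ) (t : ℝ) : Fin (2 * k + 1) → ℝ :=
  fun i => q t i.val - q t (2 * k - i.val)

/-- The (decomposed) derivative of the symmetry-defect vector. -/
noncomputable def Gvec (k : ℕ) (q : ℝ → ℕ → ℝ) (M : ℝ → ℝ) (t : ℝ) :
    Fin (2 * k + 1) → ℝ := fun i =>
  if i.val = 0 then
    (2 * (k : ℝ) - M t) / (2 * k) * (q t 1 - q t (2 * k - 1))
      - M t / (2 * k) * (q t 0 - q t (2 * k))
      + ((2 * (k : ℝ) - M t) / (2 * k) - M t / (2 * k)) * (q t (2 * k - 1) + q t (2 * k))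
  else if i.val = 2 * k then
    (2 * (k : ℝ) - M t) / (2 * k) * (q t 0 - q t (2 * k))
      - M t / (2 * k) * (q t 1 - q t (2 * k - 1))
      - ((2 * (k : ℝ) - M t) / (2 * k) - M t / (2 * k)) * (q t 0 + q t 1)
  else
    (2 * (k : ℝ) - M t) / (2 * k) * (q t (i.val + 1) - q t (2 * k - (i.val + 1)))
      + M t / (2 * k) * (q t (i.val - 1) - q t (2 * k - (i.val - 1)))
      - (q t i.val - q t (2 * k - i.val))
      + ((2 * (k : ℝ) - M t) / (2 * k) - M t / (2 * k))
          * (q t (2 * k - (i.val + 1)) - q t (2 * k - (i.val - 1)))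

theorem symmetry_preservation (k : ℕ) (hk : 1 ≤ k)
    (q : ℝ → ℕ → ℝ) (M : ℝ → ℝ)
    (hM : ∀ t, M t = ∑ n ∈ Finset.range (2 * k + 1), (n : ℝ) * q t n)
    (hsum : ∀ t, ∑ n ∈ Finset.range (2 * k + 1), q t n = 1)
    (hpos : ∀ n, 0 ≤ q 0 n)
    (h0 : ∀ t, HasDerivAt (fun s => q s 0)
      ((2 * (k : ℝ) - M t) / (2 * k) * q t 1 - M t / (2 * k) * q t 0) t)
    (hmid : ∀ n, 0 < n → n < 2 * k → ∀ t, HasDerivAt (fun s => q s n)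
      ((2 * (k : ℝ) - M t) / (2 * k) * q t (n + 1)
        + M t / (2 * k) * q t (n - 1) - q t n) t)
    (htop : ∀ t, HasDerivAt (fun s => q s (2 * k))
      (M t / (2 * k) * q t (2 * k - 1) - (2 * (k : ℝ) - M t) / (2 * k) * q t (2 * k)) t)
    (hsymm0 : ∀ n ≤ 2 * k, q 0 n = q 0 (2 * k - n)) :
    (∀ t ≥ (0 : ℝ), ∀ n ≤ 2 * k, q t n = q t (2 * k - n)) ∧
    (∀ t ≥ (0 : ℝ), M t = (k : ℝ)) := by
  have h2k : (0 : ℝ) < 2 * (k : ℝ) := by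
    have : (1 : ℝ) ≤ (k : ℝ) := by exact_mod_cast hk
    linarith
  -- continuity of the components
  have hcq : ∀ n, n ≤ 2 * k → Continuous fun t => q t n := by
    intro n hn
    rcases Nat.eq_zero_or_pos n with h1 | h1
    · subst h1; exact continuous_iff_continuousAt.2 fun t => (h0 t).continuousAt
    rcases eq_or_lt_of_le hn with h2 | h2
    · subst h2; exact continuous_iff_continuousAt.2 fun t => (htop t).continuousAt
    · exact continuous_iff_continuousAt.2 fun t => (hmid n h1 h2 t).continuousAt
  have hcM : Continuous M := by
    have hc : Continuous fun t => ∑ n ∈ Finset.range (2 * k + 1), (n : ℝ) * q t n :=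
      continuous_finset_sum _ fun n hn =>
        continuous_const.mul (hcq n (by have := Finset.mem_range.mp hn; omega))
    exact hc.congr fun t => (hM t).symm
  -- key identity
  have hkey : ∀ t, ∑ n ∈ Finset.range (2 * k + 1), ((n : ℝ) - k) * (q t n - q t (2 * k - n))
      = 2 * (M t - k) := by
    intro t
    have e0 : ∑ n ∈ Finset.range (2 * k + 1), ((n : ℝ) - k) * (q t n - q t (2 * k - n))
        = (∑ n ∈ Finset.range (2 * k + 1), ((n : ℝ) - k) * q t n)
          - ∑ n ∈ Finset.range (2 * k + 1), ((n : ℝ) - k) * q t (2 * k - n) := by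
      rw [← Finset.sum_sub_distrib]
      exact Finset.sum_congr rfl fun n _ => by ring
    have e1 : ∑ n ∈ Finset.range (2 * k + 1), ((n : ℝ) - k) * q t n = M t - k := by
      have e : ∑ n ∈ Finset.range (2 * k + 1), ((n : ℝ) - k) * q t n
          = (∑ n ∈ Finset.range (2 * k + 1), (n : ℝ) * q t n)
            - k * ∑ n ∈ Finset.range (2 * k + 1), q t n := by
        rw [Finset.mul_sum, ← Finset.sum_sub_distrib]
        exact Finset.sum_congr rfl fun n _ => by ring
      rw [e, ← hM t, hsum t]; ring
    have e2 : ∑ n ∈ Finset.range (2 * k + 1), ((n : ℝ) - k) * q t (2 * k - n) = k - M t := by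
      calc ∑ n ∈ Finset.range (2 * k + 1), ((n : ℝ) - k) * q t (2 * k - n)
          = ∑ n ∈ Finset.range (2 * k + 1), ((k : ℝ) - n) * q t n := by
            rw [← Finset.sum_range_reflect]
            refine Finset.sum_congr rfl fun n hn => ?_
            have hn' : n < 2 * k + 1 := Finset.mem_range.mp hn
            have h1 : 2 * k + 1 - 1 - n = 2 * k - n := by omega
            have h2 : 2 * k - (2 * k - n) = n := by omega
            rw [h1, h2, Nat.cast_sub (by omega)]
            push_cast; ring
        _ = k * (∑ n ∈ Finset.range (2 * k + 1), q t n)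
              - ∑ n ∈ Finset.range (2 * k + 1), (n : ℝ) * q t n := by
            rw [Finset.mul_sum, ← Finset.sum_sub_distrib]
            exact Finset.sum_congr rfl fun n _ => by ring
        _ = k - M t := by rw [← hM t, hsum t]; ring
    rw [e0, e1, e2]; ring
  -- derivative of the defect vector
  have hd : ∀ (t : ℝ) (i : Fin (2 * k + 1)),
      HasDerivAt (fun s => Fvec k q s i) (Gvec k q M t i) t := by
    intro t i
    have hle : i.val ≤ 2 * k := by have := i.isLt; omega
    by_cases hi0 : i.val = 0
    · have hfun : (fun s => Fvec k q s i) = fun s => q s 0 - q s (2 * k) := by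
        funext s; simp [Fvec, hi0]
      rw [hfun]
      have hG : Gvec k q M t i
          = (2 * (k : ℝ) - M t) / (2 * k) * (q t 1 - q t (2 * k - 1))
            - M t / (2 * k) * (q t 0 - q t (2 * k))
            + ((2 * (k : ℝ) - M t) / (2 * k) - M t / (2 * k))
              * (q t (2 * k - 1) + q t (2 * k)) := by
        simp [Gvec, hi0]
      rw [hG]
      exact ((h0 t).sub (htop t)).congr_deriv (by ring)
    · by_cases hitop : i.val = 2 * k
      · have hfun : (fun s => Fvec k q s i) = fun s => q s (2 * k) - q s 0 := by
          funext s; simp [Fvec, hitop]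
        rw [hfun]
        have hG : Gvec k q M t i
            = (2 * (k : ℝ) - M t) / (2 * k) * (q t 0 - q t (2 * k))
              - M t / (2 * k) * (q t 1 - q t (2 * k - 1))
              - ((2 * (k : ℝ) - M t) / (2 * k) - M t / (2 * k)) * (q t 0 + q t 1) := by
          simp only [Gvec, hitop, if_neg (by omega : ¬ 2 * k = 0), if_pos rfl, if_true]
        rw [hG]
        exact ((htop t).sub (h0 t)).congr_deriv (by ring)
      · have hi1 : 0 < i.val := Nat.pos_of_ne_zero hi0
        have hi2 : i.val < 2 * k := lt_of_le_of_ne hle hitop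
        have hG : Gvec k q M t i
            = (2 * (k : ℝ) - M t) / (2 * k) * (q t (i.val + 1) - q t (2 * k - (i.val + 1)))
              + M t / (2 * k) * (q t (i.val - 1) - q t (2 * k - (i.val - 1)))
              - (q t i.val - q t (2 * k - i.val))
              + ((2 * (k : ℝ) - M t) / (2 * k) - M t / (2 * k))
                  * (q t (2 * k - (i.val + 1)) - q t (2 * k - (i.val - 1))) := by
          simp only [Gvec, if_neg hi0, if_neg hitop]
        rw [hG]
        have h2 := hmid (2 * k - i.val) (by omega) (by omega) t
        rw [show 2 * k - i.val + 1 = 2 * k - (i.val - 1) by omega,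
            show 2 * k - i.val - 1 = 2 * k - (i.val + 1) by omega] at h2
        exact ((hmid i.val hi1 hi2 t).sub h2).congr_deriv (by ring)
  -- continuity of the defect vector
  have hFcont : Continuous fun t => Fvec k q t :=
    continuous_pi fun i =>
      (hcq i.val (by have := i.isLt; omega)).sub (hcq (2 * k - i.val) (by omega))
  -- componentwise bound by the sup norm
  have hFle : ∀ (s : ℝ) (m : ℕ), m ≤ 2 * k →
      |q s m - q s (2 * k - m)| ≤ ‖Fvec k q s‖ := by
    intro s m hm
    have := norm_le_pi_norm (Fvec k q s) ⟨m, by omega⟩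
    simpa [Fvec, Real.norm_eq_abs] using this
  -- bound on the coefficient difference
  have hABle : ∀ s : ℝ,
      |(2 * (k : ℝ) - M s) / (2 * k) - M s / (2 * k)|
        ≤ (2 * (k : ℝ) + 1) * ‖Fvec k q s‖ := by
    intro s
    have e : (2 * (k : ℝ) - M s) / (2 * k) - M s / (2 * k)
        = -(2 * (M s - k)) / (2 * k) := by ring
    rw [e, ← hkey s, abs_div, abs_neg, abs_of_pos h2k, div_le_iff₀ h2k]
    calc |∑ n ∈ Finset.range (2 * k + 1), ((n : ℝ) - k) * (q s n - q s (2 * k - n))|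
        ≤ ∑ n ∈ Finset.range (2 * k + 1), |((n : ℝ) - k) * (q s n - q s (2 * k - n))| :=
          Finset.abs_sum_le_sum_abs _ _
      _ ≤ ∑ n ∈ Finset.range (2 * k + 1), (2 * (k : ℝ)) * ‖Fvec k q s‖ := by
          refine Finset.sum_le_sum fun n hn => ?_
          have hn' : n ≤ 2 * k := by have := Finset.mem_range.mp hn; omega
          rw [abs_mul]
          refine mul_le_mul ?_ (hFle s n hn') (abs_nonneg _) (le_of_lt h2k)
          rw [abs_le]
          have hcast : (n : ℝ) ≤ 2 * k := by exact_mod_cast hn'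
          have hkpos : (0 : ℝ) ≤ (k : ℝ) := Nat.cast_nonneg k
          constructor <;> nlinarith
      _ = (2 * (k : ℝ) + 1) * ‖Fvec k q s‖ * (2 * (k : ℝ)) := by
          rw [Finset.sum_const, Finset.card_range]
          push_cast; ring
  -- main uniqueness argument via Grönwall
  have main : ∀ T : ℝ, ∀ t ∈ Set.Icc (0 : ℝ) T, Fvec k q t = 0 := by
    intro T t ht
    have hT0 : (0 : ℝ) ≤ T := le_trans ht.1 ht.2
    -- uniform bound on coefficients on [0, T]
    obtain ⟨C, hC⟩ := (isCompact_Icc (a := (0:ℝ)) (b := T)).exists_bound_of_continuousOn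
      (f := fun s => |(2 * (k : ℝ) - M s) / (2 * k)| + |M s / (2 * k)|
        + ∑ m ∈ Finset.range (2 * k + 1), |q s m|)
      (Continuous.continuousOn (by
        refine ((Continuous.abs ?_).add (Continuous.abs ?_)).add
          (continuous_finset_sum _ fun m hm => Continuous.abs
            (hcq m (by have := Finset.mem_range.mp hm; omega)))
        · exact (continuous_const.sub hcM).div_const _
        · exact hcM.div_const _))
    have hsum_nonneg : ∀ s : ℝ, (0:ℝ) ≤ ∑ m ∈ Finset.range (2 * k + 1), |q s m| :=
      fun s => Finset.sum_nonneg fun m _ => abs_nonneg _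
    have hA : ∀ s ∈ Set.Icc (0:ℝ) T, |(2 * (k : ℝ) - M s) / (2 * k)| ≤ C := by
      intro s hs
      have := hC s hs
      rw [Real.norm_eq_abs, abs_of_nonneg (by positivity)] at this
      have h1 := abs_nonneg (M s / (2 * (k:ℝ)))
      have h2 := hsum_nonneg s
      linarith
    have hB : ∀ s ∈ Set.Icc (0:ℝ) T, |M s / (2 * k)| ≤ C := by
      intro s hs
      have := hC s hs
      rw [Real.norm_eq_abs, abs_of_nonneg (by positivity)] at this
      have h1 := abs_nonneg ((2 * (k : ℝ) - M s) / (2 * (k:ℝ)))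
      have h2 := hsum_nonneg s
      linarith
    have hQ : ∀ s ∈ Set.Icc (0:ℝ) T, ∀ m, m ≤ 2 * k → |q s m| ≤ C := by
      intro s hs m hm
      have hle : |q s m| ≤ ∑ m ∈ Finset.range (2 * k + 1), |q s m| :=
        Finset.single_le_sum (fun a _ => abs_nonneg (q s a)) (Finset.mem_range.mpr (by omega))
      have := hC s hs
      rw [Real.norm_eq_abs, abs_of_nonneg (by positivity)] at this
      have h1 := abs_nonneg ((2 * (k : ℝ) - M s) / (2 * (k:ℝ)))
      have h2 := abs_nonneg (M s / (2 * (k:ℝ)))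
      linarith
    have hC0 : 0 ≤ C := le_trans (abs_nonneg _) (hA 0 ⟨le_rfl, hT0⟩)
    set K : ℝ := 2 * C + 1 + 2 * C * (2 * (k : ℝ) + 1) with hK
    have hK0 : 0 ≤ K := by nlinarith [mul_nonneg hC0 (Nat.cast_nonneg k : (0:ℝ) ≤ (k:ℝ))]
    -- Grönwall bound
    have hbound : ∀ s ∈ Set.Ico (0:ℝ) T, ‖Gvec k q M s‖ ≤ K * ‖Fvec k q s‖ + 0 := by
      intro s hs
      have hs' : s ∈ Set.Icc (0:ℝ) T := ⟨hs.1, le_of_lt hs.2⟩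
      rw [add_zero]
      have hKF0 : 0 ≤ K * ‖Fvec k q s‖ := mul_nonneg hK0 (norm_nonneg _)
      rw [pi_norm_le_iff_of_nonneg hKF0]
      intro i
      rw [Real.norm_eq_abs]
      have hF0 := norm_nonneg (Fvec k q s)
      have hA' := hA s hs'
      have hB' := hB s hs'
      have hAB' := hABle s
      by_cases hi0 : i.val = 0
      · have hG : Gvec k q M s i
            = (2 * (k : ℝ) - M s) / (2 * k) * (q s 1 - q s (2 * k - 1))
              - M s / (2 * k) * (q s 0 - q s (2 * k))
              + ((2 * (k : ℝ) - M s) / (2 * k) - M s / (2 * k))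
                * (q s (2 * k - 1) + q s (2 * k)) := by simp [Gvec, hi0]
        rw [hG]
        have t1 : |(2 * (k : ℝ) - M s) / (2 * k) * (q s 1 - q s (2 * k - 1))|
            ≤ C * ‖Fvec k q s‖ := by
          rw [abs_mul]
          exact mul_le_mul hA' (hFle s 1 (by omega)) (abs_nonneg _) hC0
        have t2 : |M s / (2 * k) * (q s 0 - q s (2 * k))| ≤ C * ‖Fvec k q s‖ := by
          rw [abs_mul]
          have h00 : q s 0 - q s (2 * k) = q s 0 - q s (2 * k - 0) := by norm_num
          rw [h00]
          exact mul_le_mul hB' (hFle s 0 (by omega)) (abs_nonneg _) hC0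
        have t3 : |((2 * (k : ℝ) - M s) / (2 * k) - M s / (2 * k))
            * (q s (2 * k - 1) + q s (2 * k))|
            ≤ (2 * (k : ℝ) + 1) * ‖Fvec k q s‖ * (2 * C) := by
          rw [abs_mul]
          refine mul_le_mul hAB' ?_ (abs_nonneg _)
            (mul_nonneg (by positivity) (norm_nonneg _))
          calc |q s (2 * k - 1) + q s (2 * k)| ≤ |q s (2 * k - 1)| + |q s (2 * k)| := abs_add_le _ _
            _ ≤ 2 * C := by
                have := hQ s hs' (2 * k - 1) (by omega)
                have := hQ s hs' (2 * k) le_rfl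
                linarith
        calc |(2 * (k : ℝ) - M s) / (2 * k) * (q s 1 - q s (2 * k - 1))
              - M s / (2 * k) * (q s 0 - q s (2 * k))
              + ((2 * (k : ℝ) - M s) / (2 * k) - M s / (2 * k))
                * (q s (2 * k - 1) + q s (2 * k))|
            ≤ |(2 * (k : ℝ) - M s) / (2 * k) * (q s 1 - q s (2 * k - 1))
              - M s / (2 * k) * (q s 0 - q s (2 * k))|
              + |((2 * (k : ℝ) - M s) / (2 * k) - M s / (2 * k))
                * (q s (2 * k - 1) + q s (2 * k))| := abs_add_le _ _
          _ ≤ |(2 * (k : ℝ) - M s) / (2 * k) * (q s 1 - q s (2 * k - 1))|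
              + |M s / (2 * k) * (q s 0 - q s (2 * k))|
              + |((2 * (k : ℝ) - M s) / (2 * k) - M s / (2 * k))
                * (q s (2 * k - 1) + q s (2 * k))| := by
                have := abs_sub ((2 * (k : ℝ) - M s) / (2 * k) * (q s 1 - q s (2 * k - 1)))
                  (M s / (2 * k) * (q s 0 - q s (2 * k)))
                linarith
          _ ≤ K * ‖Fvec k q s‖ := by rw [hK]; linarith
      · by_cases hitop : i.val = 2 * k
        · have hG : Gvec k q M s i
              = (2 * (k : ℝ) - M s) / (2 * k) * (q s 0 - q s (2 * k))
                - M s / (2 * k) * (q s 1 - q s (2 * k - 1))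
                - ((2 * (k : ℝ) - M s) / (2 * k) - M s / (2 * k)) * (q s 0 + q s 1) := by
            simp only [Gvec, hitop, if_neg (by omega : ¬ 2 * k = 0), if_pos rfl, if_true]
          rw [hG]
          have t1 : |(2 * (k : ℝ) - M s) / (2 * k) * (q s 0 - q s (2 * k))|
              ≤ C * ‖Fvec k q s‖ := by
            rw [abs_mul]
            have h00 : q s 0 - q s (2 * k) = q s 0 - q s (2 * k - 0) := by norm_num
            rw [h00]
            exact mul_le_mul hA' (hFle s 0 (by omega)) (abs_nonneg _) hC0
          have t2 : |M s / (2 * k) * (q s 1 - q s (2 * k - 1))| ≤ C * ‖Fvec k q s‖ := by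
            rw [abs_mul]
            exact mul_le_mul hB' (hFle s 1 (by omega)) (abs_nonneg _) hC0
          have t3 : |((2 * (k : ℝ) - M s) / (2 * k) - M s / (2 * k)) * (q s 0 + q s 1)|
              ≤ (2 * (k : ℝ) + 1) * ‖Fvec k q s‖ * (2 * C) := by
            rw [abs_mul]
            refine mul_le_mul hAB' ?_ (abs_nonneg _)
              (mul_nonneg (by positivity) (norm_nonneg _))
            calc |q s 0 + q s 1| ≤ |q s 0| + |q s 1| := abs_add_le _ _
              _ ≤ 2 * C := by
                  have := hQ s hs' 0 (by omega)
                  have := hQ s hs' 1 (by omega)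
                  linarith
          have habs1 := abs_sub ((2 * (k : ℝ) - M s) / (2 * k) * (q s 0 - q s (2 * k))
              - M s / (2 * k) * (q s 1 - q s (2 * k - 1)))
            (((2 * (k : ℝ) - M s) / (2 * k) - M s / (2 * k)) * (q s 0 + q s 1))
          have habs2 := abs_sub ((2 * (k : ℝ) - M s) / (2 * k) * (q s 0 - q s (2 * k)))
            (M s / (2 * k) * (q s 1 - q s (2 * k - 1)))
          rw [hK]; linarith
        · have hi1 : 0 < i.val := Nat.pos_of_ne_zero hi0
          have hi2 : i.val < 2 * k := lt_of_le_of_ne (by have := i.isLt; omega) hitop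
          have hG : Gvec k q M s i
              = (2 * (k : ℝ) - M s) / (2 * k) * (q s (i.val + 1) - q s (2 * k - (i.val + 1)))
                + M s / (2 * k) * (q s (i.val - 1) - q s (2 * k - (i.val - 1)))
                - (q s i.val - q s (2 * k - i.val))
                + ((2 * (k : ℝ) - M s) / (2 * k) - M s / (2 * k))
                    * (q s (2 * k - (i.val + 1)) - q s (2 * k - (i.val - 1))) := by
            simp only [Gvec, if_neg hi0, if_neg hitop]
          rw [hG]
          have t1 : |(2 * (k : ℝ) - M s) / (2 * k)
              * (q s (i.val + 1) - q s (2 * k - (i.val + 1)))| ≤ C * ‖Fvec k q s‖ := by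
            rw [abs_mul]
            exact mul_le_mul hA' (hFle s (i.val + 1) (by omega)) (abs_nonneg _) hC0
          have t2 : |M s / (2 * k) * (q s (i.val - 1) - q s (2 * k - (i.val - 1)))|
              ≤ C * ‖Fvec k q s‖ := by
            rw [abs_mul]
            exact mul_le_mul hB' (hFle s (i.val - 1) (by omega)) (abs_nonneg _) hC0
          have t3 : |q s i.val - q s (2 * k - i.val)| ≤ ‖Fvec k q s‖ :=
            hFle s i.val (by omega)
          have t4 : |((2 * (k : ℝ) - M s) / (2 * k) - M s / (2 * k))
              * (q s (2 * k - (i.val + 1)) - q s (2 * k - (i.val - 1)))|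
              ≤ (2 * (k : ℝ) + 1) * ‖Fvec k q s‖ * (2 * C) := by
            rw [abs_mul]
            refine mul_le_mul hAB' ?_ (abs_nonneg _)
              (mul_nonneg (by positivity) (norm_nonneg _))
            have habs := abs_sub (q s (2 * k - (i.val + 1))) (q s (2 * k - (i.val - 1)))
            have := hQ s hs' (2 * k - (i.val + 1)) (by omega)
            have := hQ s hs' (2 * k - (i.val - 1)) (by omega)
            linarith
          have habs1 := abs_add_le ((2 * (k : ℝ) - M s) / (2 * k)
              * (q s (i.val + 1) - q s (2 * k - (i.val + 1)))
              + M s / (2 * k) * (q s (i.val - 1) - q s (2 * k - (i.val - 1)))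
              - (q s i.val - q s (2 * k - i.val)))
            (((2 * (k : ℝ) - M s) / (2 * k) - M s / (2 * k))
              * (q s (2 * k - (i.val + 1)) - q s (2 * k - (i.val - 1))))
          have habs2 := abs_sub ((2 * (k : ℝ) - M s) / (2 * k)
              * (q s (i.val + 1) - q s (2 * k - (i.val + 1)))
              + M s / (2 * k) * (q s (i.val - 1) - q s (2 * k - (i.val - 1))))
            (q s i.val - q s (2 * k - i.val))
          have habs3 := abs_add_le ((2 * (k : ℝ) - M s) / (2 * k)
              * (q s (i.val + 1) - q s (2 * k - (i.val + 1))))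
            (M s / (2 * k) * (q s (i.val - 1) - q s (2 * k - (i.val - 1))))
          rw [hK]; linarith
    have hzero : Fvec k q 0 = 0 := by
      funext i
      have := hsymm0 i.val (by have := i.isLt; omega)
      simp [Fvec, this]
    have hgron := norm_le_gronwallBound_of_norm_deriv_right_le
      (f := fun s => Fvec k q s) (f' := fun s => Gvec k q M s)
      (δ := 0) (K := K) (ε := 0) (a := 0) (b := T)
      (hFcont.continuousOn)
      (fun s _ => (hasDerivAt_pi.2 (fun i => hd s i)).hasDerivWithinAt)
      (by show ‖Fvec k q 0‖ ≤ 0; rw [hzero, norm_zero])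
      hbound t ht
    have hgb : gronwallBound 0 K 0 (t - 0) = 0 := by
      simp [gronwallBound]
    rw [hgb] at hgron
    exact norm_le_zero_iff.mp hgron
  constructor
  · intro t ht n hn
    have hz := main t t ⟨ht, le_rfl⟩
    have := congrFun hz ⟨n, by omega⟩
    simpa [Fvec] using sub_eq_zero.mp (by simpa [Fvec] using this)
  · intro t ht
    have hz := main t t ⟨ht, le_rfl⟩
    have hzero : ∑ n ∈ Finset.range (2 * k + 1), ((n : ℝ) - k) * (q t n - q t (2 * k - n)) = 0 := by
      refine Finset.sum_eq_zero fun n hn => ?_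
      have hn' : n ≤ 2 * k := by have := Finset.mem_range.mp hn; omega
      have := congrFun hz ⟨n, by omega⟩
      have h0' : q t n - q t (2 * k - n) = 0 := by simpa [Fvec] using this
      rw [h0', mul_zero]
    have := hkey t
    rw [hzero] at this
    linarith
end
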